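/- arXiv:solv-int/9906010 — 9 statements merged into one kernel-verified Lean document; each statement's English description precedes it below -/
import Mathlib

section
/- If g is a Lie algebra with a linear operator R satisfying the modified Yang–Baxter equation [R(X),R(Y)] − R([R(X),Y]+[X,R(Y)]) = −α[X,Y] for some constant α, then the bracket [X,Y]_R = (1/2)([R(X),Y] + [X,R(Y)]) defines a Lie algebra structure on g (bilinear, antisymmetric, satisfying the Jacobi identity). -/
/-- The bracket `[X,Y]_R = (1/2)([R X, Y] + [X, R Y])`. -/
def rbr {K L : Type*} [Field K] [LieRing L] [LieAlgebra K L]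
    (R : L →ₗ[K] L) (X Y : L) : L := (2 : K)⁻¹ • (⁅R X, Y⁆ + ⁅X, R Y⁆)

/-- If `R` satisfies the modified Yang–Baxter equation with parameter `α`,
then `[X,Y]_R = (1/2)([R X,Y] + [X,R Y])` defines a Lie algebra structure on `L`:
bilinear, antisymmetric, and satisfying the Jacobi identity. -/
theorem stmt2 {K L : Type*} [Field K] [LieRing L] [LieAlgebra K L]
    (h2 : (2 : K) ≠ 0) (R : L →ₗ[K] L) (α : K)
    (hmYB : ∀ X Y : L, ⁅R X, R Y⁆ - R (⁅R X, Y⁆ + ⁅X, R Y⁆) = -(α • ⁅X, Y⁆)) :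
    (∀ X X' Y : L, rbr R (X + X') Y = rbr R X Y + rbr R X' Y) ∧
    (∀ (c : K) (X Y : L), rbr R (c • X) Y = c • rbr R X Y) ∧
    (∀ X Y Y' : L, rbr R X (Y + Y') = rbr R X Y + rbr R X Y') ∧
    (∀ (c : K) (X Y : L), rbr R X (c • Y) = c • rbr R X Y) ∧
    (∀ X Y : L, rbr R X Y = -rbr R Y X) ∧
    (∀ X Y Z : L, rbr R X (rbr R Y Z) + rbr R Y (rbr R Z X) + rbr R Z (rbr R X Y) = 0) := by
  have hR : ∀ Y Z : L, R (⁅R Y, Z⁆ + ⁅Y, R Z⁆) = ⁅R Y, R Z⁆ + α • ⁅Y, Z⁆ := by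
    intro Y Z
    have := hmYB Y Z
    linear_combination (norm := module) -this
  refine ⟨?_, ?_, ?_, ?_, ?_, ?_⟩
  · intro X X' Y
    simp only [rbr, map_add, add_lie, lie_add, smul_add]
    module
  · intro c X Y
    simp only [rbr, map_smul, smul_lie, lie_smul, smul_add]
    module
  · intro X Y Y'
    simp only [rbr, map_add, add_lie, lie_add, smul_add]
    module
  · intro c X Y
    simp only [rbr, map_smul, smul_lie, lie_smul, smul_add]
    module
  · intro X Y
    simp only [rbr]
    rw [← lie_skew (R X) Y, ← lie_skew X (R Y)]
    module
  · intro X Y Z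
    simp only [rbr, map_smul, lie_smul, smul_lie, hR]
    have j1 := lie_jacobi (R X) (R Y) Z
    have j2 := lie_jacobi (R Y) (R Z) X
    have j3 := lie_jacobi (R Z) (R X) Y
    have j4 := lie_jacobi X Y Z
    -- expand nested brackets
    simp only [lie_add, add_lie, lie_smul, smul_lie]
    linear_combination (norm := module) ((2:K)⁻¹ * (2:K)⁻¹) • j1 +
      ((2:K)⁻¹ * (2:K)⁻¹) • j2 + ((2:K)⁻¹ * (2:K)⁻¹) • j3 +
      ((2:K)⁻¹ * (2:K)⁻¹ * α) • j4
end

section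
/- In the periodic case, for the operator W with W(E_kk) = Σ_j sgn(k−j) E_jj, the matrix 𝓔 = λ Σ_{k=1}^N E_{k+1,k} (indices mod N, so E_{N+1,N} = E_{1,N}), and an arbitrary diagonal matrix D, one has W(D)𝓔 − 𝓔W(D) + D𝓔 + 𝓔D = 2λ·tr(D)·E_{1,N}. -/
/-- The cyclic shift matrix `Σ_{k=1}^{N} E_{k+1,k}` with indices mod `N`
(so that `E_{N+1,N} = E_{1,N}`); written in 0-based indexing on `Fin N`. -/
def cycShift (N : ℕ) : Matrix (Fin N) (Fin N) ℝ :=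
  Matrix.of fun j k => if (j : ℕ) = ((k : ℕ) + 1) % N then 1 else 0

/-- The operator `W` on diagonal matrices: `W(D) = Σ_j (Σ_k d_k sgn(k-j)) E_jj`. -/
def WdiagP (N : ℕ) (d : Fin N → ℝ) : Matrix (Fin N) (Fin N) ℝ :=
  Matrix.diagonal fun j => ∑ k, d k *
    (if (j : ℕ) < (k : ℕ) then 1 else if (k : ℕ) < (j : ℕ) then -1 else 0)

/-- In the periodic case, with `𝓔 = λ Σ_k E_{k+1,k}` (indices mod N)
and an arbitrary diagonal matrix `D`,
`W(D)𝓔 − 𝓔W(D) + D𝓔 + 𝓔D = 2λ·tr(D)·E_{1,N}`. -/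
theorem stmt4 (N : ℕ) (hN : 0 < N) (lam : ℝ) (d : Fin N → ℝ) :
    WdiagP N d * (lam • cycShift N) - (lam • cycShift N) * WdiagP N d
      + Matrix.diagonal d * (lam • cycShift N) + (lam • cycShift N) * Matrix.diagonal d
    = (2 * lam * ∑ k, d k) •
        Matrix.single (⟨0, hN⟩ : Fin N) (⟨N - 1, by omega⟩ : Fin N) 1 := by
  rw [Matrix.mul_smul, Matrix.smul_mul, Matrix.mul_smul, Matrix.smul_mul]
  ext i j
  simp only [Matrix.smul_apply, Matrix.add_apply, Matrix.sub_apply,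
    Matrix.diagonal_mul, Matrix.mul_diagonal, WdiagP, cycShift, Matrix.of_apply,
    Matrix.single, smul_eq_mul]
  have hiN := i.isLt
  have hjN := j.isLt
  by_cases h : (i : ℕ) = ((j : ℕ) + 1) % N
  · simp only [if_pos h, mul_one, one_mul]
    by_cases hj : (j : ℕ) = N - 1
    · have hi : (i : ℕ) = 0 := by
        rw [h, hj, Nat.sub_add_cancel hN, Nat.mod_self]
      have hcond : (⟨0, hN⟩ : Fin N) = i ∧ (⟨N - 1, by omega⟩ : Fin N) = j :=
        ⟨Fin.ext (by simp [hi]), Fin.ext (by simp [hj])⟩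
      rw [if_pos hcond, mul_one]
      have key : (∑ k, d k * (if (i:ℕ) < (k:ℕ) then 1 else if (k:ℕ) < (i:ℕ) then -1 else 0))
          - (∑ k, d k * (if (j:ℕ) < (k:ℕ) then 1 else if (k:ℕ) < (j:ℕ) then -1 else 0))
          = 2 * (∑ k, d k) - d i - d j := by
        rw [← Finset.sum_sub_distrib, Finset.mul_sum]
        have : ∀ k : Fin N, d k * (if (i:ℕ) < (k:ℕ) then 1 else if (k:ℕ) < (i:ℕ) then -1 else 0)
            - d k * (if (j:ℕ) < (k:ℕ) then 1 else if (k:ℕ) < (j:ℕ) then -1 else 0)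
            = 2 * d k - (if k = i then d k else 0) - (if k = j then d k else 0) := by
          intro k
          have hkN := k.isLt
          simp only [Fin.ext_iff]
          split_ifs <;> first | ring1 | (exfalso; omega)
        rw [Finset.sum_congr rfl fun k _ => this k]
        simp only [Finset.sum_sub_distrib, Finset.sum_ite_eq' Finset.univ, Finset.mem_univ,
          if_true]
      linear_combination lam * key
    · have hcond : ¬((⟨0, hN⟩ : Fin N) = i ∧ (⟨N - 1, by omega⟩ : Fin N) = j) := by
        rintro ⟨-, h2⟩
        exact hj (by rw [← h2])
      rw [if_neg hcond, mul_zero]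
      have hi : (i : ℕ) = (j : ℕ) + 1 := by
        rw [h, Nat.mod_eq_of_lt (by omega)]
      have key : (∑ k, d k * (if (i:ℕ) < (k:ℕ) then 1 else if (k:ℕ) < (i:ℕ) then -1 else 0))
          - (∑ k, d k * (if (j:ℕ) < (k:ℕ) then 1 else if (k:ℕ) < (j:ℕ) then -1 else 0))
          = - d i - d j := by
        rw [← Finset.sum_sub_distrib]
        have : ∀ k : Fin N, d k * (if (i:ℕ) < (k:ℕ) then 1 else if (k:ℕ) < (i:ℕ) then -1 else 0)
            - d k * (if (j:ℕ) < (k:ℕ) then 1 else if (k:ℕ) < (j:ℕ) then -1 else 0)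
            = (if k = i then -d k else 0) + (if k = j then -d k else 0) := by
          intro k
          have hkN := k.isLt
          simp only [Fin.ext_iff]
          split_ifs <;> first | ring1 | (exfalso; omega)
        rw [Finset.sum_congr rfl fun k _ => this k]
        simp only [Finset.sum_add_distrib, Finset.sum_ite_eq' Finset.univ, Finset.mem_univ,
          if_true]
        ring
      linear_combination lam * key
  · have hcond : ¬((⟨0, hN⟩ : Fin N) = i ∧ (⟨N - 1, by omega⟩ : Fin N) = j) := by
      rintro ⟨h1, h2⟩
      apply h
      rw [← h1, ← h2]
      simp [Nat.sub_add_cancel hN]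
    rw [if_neg h, if_neg hcond]
    ring
end

section
/- In the open-end case, for any matrix X₋₁ = Σ_{k=1}^{N−1} x_k E_{k,k+1} on the first superdiagonal, one has 𝓔X₋₁ + X₋₁𝓔 + W([X₋₁,𝓔]) = 0, where 𝓔 = Σ_{k=1}^{N−1} E_{k+1,k} and W is extended to all of gl(N) by W = W ∘ P₀ with P₀ the projection onto the diagonal part. -/
/-- The lower shift matrix `𝓔 = Σ_{k=1}^{N-1} E_{k+1,k}` (open-end case). -/
def lowerShift5 (N : ℕ) : Matrix (Fin N) (Fin N) ℝ :=
  Matrix.of fun j k => if (j : ℕ) = (k : ℕ) + 1 then 1 else 0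

/-- A matrix `X₋₁ = Σ_{k=1}^{N-1} x_k E_{k,k+1}` supported on the first superdiagonal. -/
def superDiag (N : ℕ) (x : Fin N → ℝ) : Matrix (Fin N) (Fin N) ℝ :=
  Matrix.of fun j k => if (k : ℕ) = (j : ℕ) + 1 then x j else 0

/-- `W` extended to all of gl(N) by `W = W ∘ P₀`:
`W(X) = Σ_j (Σ_k X_kk sgn(k-j)) E_jj`. -/
def Wop (N : ℕ) (X : Matrix (Fin N) (Fin N) ℝ) : Matrix (Fin N) (Fin N) ℝ :=
  Matrix.diagonal fun j => ∑ k, X k k *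
    (if (j : ℕ) < (k : ℕ) then 1 else if (k : ℕ) < (j : ℕ) then -1 else 0)

def xExt (N : ℕ) (x : Fin N → ℝ) : ℕ → ℝ := fun n => if h : n < N then x ⟨n, h⟩ else 0

lemma prodEX (N : ℕ) (x : Fin N → ℝ) :
    lowerShift5 N * superDiag N x =
      Matrix.diagonal (fun j : Fin N => if (j:ℕ) = 0 then 0 else xExt N x ((j:ℕ)-1)) := by
  ext i j
  simp only [lowerShift5, superDiag, Matrix.mul_apply, Matrix.of_apply, Matrix.diagonal_apply]
  by_cases h1 : (i:ℕ) = 0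
  · rw [Finset.sum_eq_zero (fun m _ => by simp [h1])]
    split_ifs <;> simp_all
  · have hm : (i:ℕ) - 1 < N := by omega
    rw [Finset.sum_eq_single (⟨(i:ℕ)-1, hm⟩ : Fin N)]
    · simp only [xExt]
      by_cases hij : i = j
      · subst hij
        simp only [if_pos rfl]
        rw [if_pos (by omega), if_pos (by omega : (i:ℕ) = ((i:ℕ)-1)+1), if_neg h1, dif_pos hm]
        simp
      · rw [if_neg hij, if_pos (by omega : (i:ℕ) = ((i:ℕ)-1)+1),
          if_neg (by simp [Fin.ext_iff] at hij; omega)]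
        ring
    · intro m _ hne
      rw [if_neg (fun h => hne (by simp [Fin.ext_iff]; omega)), zero_mul]
    · simp

lemma prodXE (N : ℕ) (x : Fin N → ℝ) :
    superDiag N x * lowerShift5 N =
      Matrix.diagonal (fun j : Fin N => if (j:ℕ)+1 < N then xExt N x j else 0) := by
  ext i j
  simp only [lowerShift5, superDiag, Matrix.mul_apply, Matrix.of_apply, Matrix.diagonal_apply]
  by_cases h1 : (i:ℕ)+1 < N
  · rw [Finset.sum_eq_single (⟨(i:ℕ)+1, h1⟩ : Fin N)]
    · simp only [xExt]
      by_cases hij : i = j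
      · subst hij
        simp [h1, i.isLt]
      · rw [if_neg hij, if_pos (by simp), if_neg (by simp [Fin.ext_iff] at hij ⊢; omega)]
        ring
    · intro m _ hne
      rw [if_neg (fun h => hne (by simp [Fin.ext_iff]; omega)), zero_mul]
    · simp
  · rw [Finset.sum_eq_zero (fun m _ => by rw [if_neg (by omega), zero_mul])]
    split_ifs <;> simp_all
lemma key (N : ℕ) (y : ℕ → ℝ) (j : ℕ) (hj : j < N) :
    ∑ k ∈ Finset.range N, ((if k+1 < N then y k else 0) - (if k = 0 then 0 else y (k-1))) *
      (if j < k then (1:ℝ) else if k < j then -1 else 0)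
    = -(if j+1 < N then y j else 0) - (if j = 0 then 0 else y (j-1)) := by
  obtain ⟨M, rfl⟩ : ∃ M, N = M + 1 := ⟨N - 1, by omega⟩
  have hsplit : ∀ k, ((if k+1 < M+1 then y k else 0) - (if k = 0 then 0 else y (k-1))) *
      (if j < k then (1:ℝ) else if k < j then -1 else 0)
      = (if k+1 < M+1 then y k else 0) * (if j < k then (1:ℝ) else if k < j then -1 else 0)
        - (if k = 0 then 0 else y (k-1)) * (if j < k then (1:ℝ) else if k < j then -1 else 0) :=
    fun k => by ring
  rw [Finset.sum_congr rfl (fun k _ => hsplit k), Finset.sum_sub_distrib]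
  have hA : ∑ k ∈ Finset.range (M+1), (if k+1 < M+1 then y k else 0) *
      (if j < k then (1:ℝ) else if k < j then -1 else 0)
      = ∑ k ∈ Finset.range M, y k * (if j < k then (1:ℝ) else if k < j then -1 else 0) := by
    rw [Finset.sum_range_succ, if_neg (by omega), zero_mul, add_zero]
    exact Finset.sum_congr rfl (fun k hk => by
      rw [if_pos (by simp at hk; omega)])
  have hB : ∑ k ∈ Finset.range (M+1), (if k = 0 then 0 else y (k-1)) *
      (if j < k then (1:ℝ) else if k < j then -1 else 0)
      = ∑ k ∈ Finset.range M, y k * (if j < k+1 then (1:ℝ) else if k+1 < j then -1 else 0) := by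
    rw [Finset.sum_range_succ']
    simp
  rw [hA, hB, ← Finset.sum_sub_distrib]
  have hstep : ∀ k, y k * (if j < k then (1:ℝ) else if k < j then -1 else 0)
      - y k * (if j < k+1 then (1:ℝ) else if k+1 < j then -1 else 0)
      = (if k = j then -(y k) else 0) + (if k + 1 = j then -(y k) else 0) := by
    intro k
    rcases lt_trichotomy k j with h | h | h
    · rcases Nat.lt_or_ge (k+1) j with h2 | h2
      · rw [if_neg (by omega), if_pos h, if_neg (by omega), if_pos h2,
          if_neg (by omega), if_neg (by omega)]; ring
      · have : k + 1 = j := by omega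
        rw [if_neg (by omega), if_pos h, if_neg (by omega), if_neg (by omega),
          if_neg (by omega), if_pos this]; ring
    · subst h
      rw [if_neg (by omega), if_neg (by omega), if_pos (by omega), if_pos rfl,
        if_neg (by omega)]; ring
    · rw [if_pos h, if_pos (by omega), if_neg (by omega), if_neg (by omega)]; ring
  rw [Finset.sum_congr rfl (fun k _ => hstep k), Finset.sum_add_distrib]
  rw [Finset.sum_ite_eq' (Finset.range M) j (fun k => -(y k))]
  have h2 : ∑ k ∈ Finset.range M, (if k + 1 = j then -(y k) else 0)
      = if j = 0 then 0 else -(y (j-1)) := by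
    by_cases hj0 : j = 0
    · rw [if_pos hj0, Finset.sum_eq_zero]
      intro k _; rw [if_neg (by omega)]
    · rw [if_neg hj0,
        show (∑ k ∈ Finset.range M, if k + 1 = j then -(y k) else 0)
            = ∑ k ∈ Finset.range M, if k = j - 1 then -(y k) else 0 from
          Finset.sum_congr rfl (fun k _ => by
            split_ifs with h h2 h2
            · rfl
            · exfalso; omega
            · exfalso; omega
            · rfl),
        Finset.sum_ite_eq' (Finset.range M) (j-1) (fun k => -(y k)),
        if_pos (Finset.mem_range.mpr (by omega))]
  rw [h2]
  by_cases hjM : j < M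
  · rw [if_pos (Finset.mem_range.mpr hjM), if_pos (show j+1 < M+1 by omega)]
    by_cases hj0 : j = 0
    · rw [if_pos hj0, if_pos hj0]; ring
    · rw [if_neg hj0, if_neg hj0]; ring
  · rw [if_neg (show j ∉ Finset.range M by simpa using hjM),
      if_neg (show ¬ j+1 < M+1 by omega)]
    by_cases hj0 : j = 0
    · rw [if_pos hj0, if_pos hj0]; ring
    · rw [if_neg hj0, if_neg hj0]; ring

/-- In the open-end case, for any superdiagonal matrix `X₋₁`,
`𝓔X₋₁ + X₋₁𝓔 + W([X₋₁,𝓔]) = 0`. -/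
theorem stmt5 (N : ℕ) (x : Fin N → ℝ) :
    lowerShift5 N * superDiag N x + superDiag N x * lowerShift5 N
      + Wop N (superDiag N x * lowerShift5 N - lowerShift5 N * superDiag N x) = 0 := by
  rw [prodEX, prodXE]
  have hW : Wop N (Matrix.diagonal (fun j : Fin N => if (j:ℕ)+1 < N then xExt N x j else 0)
      - Matrix.diagonal (fun j : Fin N => if (j:ℕ) = 0 then 0 else xExt N x ((j:ℕ)-1)))
      = Matrix.diagonal (fun j : Fin N =>
          -(if (j:ℕ)+1 < N then xExt N x j else 0)
          - (if (j:ℕ) = 0 then 0 else xExt N x ((j:ℕ)-1))) := by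
    unfold Wop
    refine congrArg Matrix.diagonal (funext fun j => ?_)
    calc ∑ k : Fin N, ((Matrix.diagonal (fun j : Fin N => if (j:ℕ)+1 < N then xExt N x j else 0)
          - Matrix.diagonal (fun j : Fin N => if (j:ℕ) = 0 then 0 else xExt N x ((j:ℕ)-1))) k k)
          * (if (j:ℕ) < (k:ℕ) then (1:ℝ) else if (k:ℕ) < (j:ℕ) then -1 else 0)
        = ∑ k : Fin N, (fun n : ℕ =>
            ((if n+1 < N then xExt N x n else 0) - (if n = 0 then 0 else xExt N x (n-1))) *
            (if (j:ℕ) < n then (1:ℝ) else if n < (j:ℕ) then -1 else 0)) (k:ℕ) :=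
          Finset.sum_congr rfl (fun k _ => by
            rw [Matrix.sub_apply, Matrix.diagonal_apply_eq, Matrix.diagonal_apply_eq])
      _ = ∑ n ∈ Finset.range N,
            ((if n+1 < N then xExt N x n else 0) - (if n = 0 then 0 else xExt N x (n-1))) *
            (if (j:ℕ) < n then (1:ℝ) else if n < (j:ℕ) then -1 else 0) :=
          Fin.sum_univ_eq_sum_range (fun n =>
            ((if n+1 < N then xExt N x n else 0) - (if n = 0 then 0 else xExt N x (n-1))) *
            (if (j:ℕ) < n then (1:ℝ) else if n < (j:ℕ) then -1 else 0)) N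
      _ = -(if (j:ℕ)+1 < N then xExt N x j else 0)
          - (if (j:ℕ) = 0 then 0 else xExt N x ((j:ℕ)-1)) := key N (xExt N x) j j.isLt
  rw [hW]
  ext i k
  by_cases hik : i = k
  · subst hik
    simp only [Matrix.add_apply, Matrix.diagonal_apply_eq, Matrix.zero_apply]
    ring
  · simp [Matrix.diagonal_apply_ne _ hik, hik]
end

section
/- Let 𝓕(λ) = I − αλ Σ_{k=1}^{N−1} E_{k+1,k} in gl(N) with Laurent-polynomial entries in λ (open-end case). Then 𝓕 is invertible, and for the auxiliary matrices 𝓑₁ = Σ_k (b_k/(1+αb_k)) E_{kk} + λ Σ_k (1/(1+αb_k)) E_{k+1,k} and 𝓑₂ = Σ_k (b_k/(1+αb_k)) E_{kk} + λ Σ_k (1/(1+αb_{k+1})) E_{k+1,k}, the relation 𝓕𝓑₂ − 𝓑₁𝓕 = 0 holds. -/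
/-- The lower shift matrix `Σ_{k=1}^{N-1} E_{k+1,k}` (open-end case). -/
def lowerShift6 (N : ℕ) : Matrix (Fin N) (Fin N) ℝ :=
  Matrix.of fun j k => if (j : ℕ) = (k : ℕ) + 1 then 1 else 0

/-- `𝓕(λ) = I − αλ Σ E_{k+1,k}` is invertible, and with
`𝓑₁ = Σ (b_k/(1+αb_k)) E_kk + λ Σ (1/(1+αb_k)) E_{k+1,k}`,
`𝓑₂ = Σ (b_k/(1+αb_k)) E_kk + λ Σ (1/(1+αb_{k+1})) E_{k+1,k}`,
one has `𝓕𝓑₂ − 𝓑₁𝓕 = 0` (for every value of the parameter λ). -/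
theorem stmt6 (N : ℕ) (α : ℝ) (b : Fin N → ℝ) (hb : ∀ k, 1 + α * b k ≠ 0) (lam : ℝ) :
    IsUnit ((1 : Matrix (Fin N) (Fin N) ℝ) - (α * lam) • lowerShift6 N) ∧
    ((1 : Matrix (Fin N) (Fin N) ℝ) - (α * lam) • lowerShift6 N) *
        (Matrix.diagonal (fun k => b k / (1 + α * b k))
          + lam • Matrix.of (fun j k : Fin N =>
              if (j : ℕ) = (k : ℕ) + 1 then 1 / (1 + α * b j) else 0))
      - (Matrix.diagonal (fun k => b k / (1 + α * b k))
          + lam • Matrix.of (fun j k : Fin N =>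
              if (j : ℕ) = (k : ℕ) + 1 then 1 / (1 + α * b k) else 0))
        * ((1 : Matrix (Fin N) (Fin N) ℝ) - (α * lam) • lowerShift6 N) = 0 := by
  set c : ℝ := α * lam with hc
  set S : Matrix (Fin N) (Fin N) ℝ := lowerShift6 N with hS
  set D : Matrix (Fin N) (Fin N) ℝ :=
    Matrix.diagonal (fun k => b k / (1 + α * b k)) with hD
  set S2 : Matrix (Fin N) (Fin N) ℝ :=
    Matrix.of (fun j k : Fin N =>
      if (j : ℕ) = (k : ℕ) + 1 then 1 / (1 + α * b j) else 0) with hS2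
  set S1 : Matrix (Fin N) (Fin N) ℝ :=
    Matrix.of (fun j k : Fin N =>
      if (j : ℕ) = (k : ℕ) + 1 then 1 / (1 + α * b k) else 0) with hS1
  constructor
  · rw [Matrix.isUnit_iff_isUnit_det]
    have hdet : ((1 : Matrix (Fin N) (Fin N) ℝ) - c • S).det = 1 := by
      rw [Matrix.det_of_lowerTriangular]
      · rw [Finset.prod_eq_one]
        intro i _
        simp [hS, lowerShift6, Matrix.one_apply]
      · intro i j hij
        have hlt : (i : ℕ) < (j : ℕ) := OrderDual.toDual_lt_toDual.mp hij
        have h1 : i ≠ j := by intro h; rw [h] at hlt; omega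
        have h2 : (i : ℕ) ≠ (j : ℕ) + 1 := by omega
        simp [hS, lowerShift6, Matrix.one_apply, h1, h2]
    rw [hdet]
    exact isUnit_one
  · have h1 : S * S2 = S1 * S := by
      ext j k
      rw [Matrix.mul_apply, Matrix.mul_apply]
      refine Finset.sum_congr rfl fun x _ => ?_
      simp only [hS, hS1, hS2, lowerShift6, Matrix.of_apply]
      split_ifs <;> ring
    have h2 : lam • S2 - lam • S1 - c • (S * D) + c • (D * S) = 0 := by
      ext j k
      simp only [Matrix.sub_apply, Matrix.add_apply, Matrix.smul_apply,
        Matrix.mul_diagonal, Matrix.diagonal_mul, Matrix.zero_apply, smul_eq_mul,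
        hS, hS1, hS2, hD, lowerShift6, Matrix.of_apply]
      split_ifs with h
      · have hbj := hb j
        have hbk := hb k
        field_simp
        ring
      · ring
    have expand :
        ((1 : Matrix (Fin N) (Fin N) ℝ) - c • S) * (D + lam • S2)
          - (D + lam • S1) * ((1 : Matrix (Fin N) (Fin N) ℝ) - c • S)
        = lam • S2 - lam • S1 - c • (S * D) + c • (D * S) := by
      simp only [mul_add, add_mul, sub_mul, mul_sub, one_mul, mul_one,
        Matrix.smul_mul, Matrix.mul_smul, h1]
      module
    rw [expand, h2]
end

section
/- Given the relation 𝓕𝓑₂ − 𝓑₁𝓕 = 0 and invertibility of 𝓕, the matrix differential equation Ṫ = T𝓑₂ − 𝓑₁T is equivalent to the Lax equation d/dt(I + αT𝓕⁻¹) = [I + αT𝓕⁻¹, 𝓑₁], and also to d/dt(I + α𝓕⁻¹T) = [I + α𝓕⁻¹T, 𝓑₂], where 𝓕 is constant in time. -/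
lemma key_deriv {N : ℕ} (f g D : ℝ → Matrix (Fin N) (Fin N) ℝ)
    (hD : ∀ (i j : Fin N) (t : ℝ), HasDerivAt (fun s => f s i j) (D t i j) t) :
    (∀ (i j : Fin N) (t : ℝ), HasDerivAt (fun s => f s i j) (g t i j) t) ↔
      ∀ t, g t = D t := by
  constructor
  · intro h t
    ext i j
    exact (h i j t).unique (hD i j t)
  · intro h i j t
    rw [h t]
    exact hD i j t

lemma deriv_mul_right {N : ℕ} (T T' : ℝ → Matrix (Fin N) (Fin N) ℝ)
    (hT : ∀ (i j : Fin N) (t : ℝ), HasDerivAt (fun s => T s i j) (T' t i j) t)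
    (C : Matrix (Fin N) (Fin N) ℝ) (α : ℝ) (i j : Fin N) (t : ℝ) :
    HasDerivAt (fun s => ((1 : Matrix (Fin N) (Fin N) ℝ) + α • (T s * C)) i j)
      ((α • (T' t * C)) i j) t := by
  have h1 : HasDerivAt (fun s => (T s * C) i j) ((T' t * C) i j) t := by
    simp only [Matrix.mul_apply]
    exact HasDerivAt.fun_sum (fun k _ => (hT i k t).mul_const _)
  simpa [Matrix.add_apply, Matrix.smul_apply] using
    (hasDerivAt_const t ((1 : Matrix (Fin N) (Fin N) ℝ) i j)).fun_add (h1.const_mul α)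

lemma deriv_mul_left {N : ℕ} (T T' : ℝ → Matrix (Fin N) (Fin N) ℝ)
    (hT : ∀ (i j : Fin N) (t : ℝ), HasDerivAt (fun s => T s i j) (T' t i j) t)
    (C : Matrix (Fin N) (Fin N) ℝ) (α : ℝ) (i j : Fin N) (t : ℝ) :
    HasDerivAt (fun s => ((1 : Matrix (Fin N) (Fin N) ℝ) + α • (C * T s)) i j)
      ((α • (C * T' t)) i j) t := by
  have h1 : HasDerivAt (fun s => (C * T s) i j) ((C * T' t) i j) t := by
    simp only [Matrix.mul_apply]
    exact HasDerivAt.fun_sum (fun k _ => (hT k j t).const_mul _)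
  simpa [Matrix.add_apply, Matrix.smul_apply] using
    (hasDerivAt_const t ((1 : Matrix (Fin N) (Fin N) ℝ) i j)).fun_add (h1.const_mul α)

/-- Given `𝓕𝓑₂ = 𝓑₁𝓕` with `𝓕` invertible and constant in time,
the matrix differential equation `Ṫ = T𝓑₂ − 𝓑₁T` is equivalent to the Lax equation
`d/dt (I + αT𝓕⁻¹) = [I + αT𝓕⁻¹, 𝓑₁]`, and also to
`d/dt (I + α𝓕⁻¹T) = [I + α𝓕⁻¹T, 𝓑₂]`. -/
theorem stmt7 (N : ℕ) (α : ℝ) (hα : α ≠ 0)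
    (F : Matrix (Fin N) (Fin N) ℝ) [Invertible F]
    (T T' B1 B2 : ℝ → Matrix (Fin N) (Fin N) ℝ)
    (hFB : ∀ t, F * B2 t = B1 t * F)
    (hT : ∀ (i j : Fin N) (t : ℝ), HasDerivAt (fun s => T s i j) (T' t i j) t) :
    ((∀ t, T' t = T t * B2 t - B1 t * T t) ↔
      (∀ (i j : Fin N) (t : ℝ),
        HasDerivAt (fun s => ((1 : Matrix (Fin N) (Fin N) ℝ) + α • (T s * ⅟F)) i j)
          ((((1 : Matrix (Fin N) (Fin N) ℝ) + α • (T t * ⅟F)) * B1 t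
            - B1 t * ((1 : Matrix (Fin N) (Fin N) ℝ) + α • (T t * ⅟F))) i j) t)) ∧
    ((∀ t, T' t = T t * B2 t - B1 t * T t) ↔
      (∀ (i j : Fin N) (t : ℝ),
        HasDerivAt (fun s => ((1 : Matrix (Fin N) (Fin N) ℝ) + α • (⅟F * T s)) i j)
          ((((1 : Matrix (Fin N) (Fin N) ℝ) + α • (⅟F * T t)) * B2 t
            - B2 t * ((1 : Matrix (Fin N) (Fin N) ℝ) + α • (⅟F * T t))) i j) t)) := by
  have hBF : ∀ t, ⅟F * B1 t = B2 t * ⅟F := by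
    intro t
    have h : B2 t = ⅟F * B1 t * F := by
      rw [mul_assoc, ← hFB t, invOf_mul_cancel_left]
    rw [h, mul_assoc, mul_invOf_self, mul_one]
  have hsmul : ∀ (A B : Matrix (Fin N) (Fin N) ℝ), α • A = α • B → A = B := by
    intro A B h
    have h2 := congrArg (fun M => α⁻¹ • M) h
    simpa [smul_smul, inv_mul_cancel₀ hα] using h2
  constructor
  · rw [key_deriv _ _ _ (deriv_mul_right T T' hT (⅟F) α)]
    constructor
    · intro h t
      rw [h t]
      rw [Matrix.add_mul, Matrix.mul_add, one_mul, mul_one,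
        smul_mul_assoc, mul_smul_comm, add_sub_add_left_eq_sub, ← smul_sub]
      congr 1
      simp only [Matrix.sub_mul, mul_assoc]
      rw [hBF t]
    · intro h t
      have h1 := h t
      rw [Matrix.add_mul, Matrix.mul_add, one_mul, mul_one,
        smul_mul_assoc, mul_smul_comm] at h1
      have h2 : T' t * ⅟F = T t * ⅟F * B1 t - B1 t * (T t * ⅟F) := by
        apply hsmul
        rw [smul_sub, ← h1]
        abel
      have h4 : T' t = (T t * ⅟F * B1 t - B1 t * (T t * ⅟F)) * F := by
        rw [← h2, mul_assoc, invOf_mul_self, mul_one]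
      rw [h4]
      simp only [Matrix.sub_mul, mul_assoc, ← hFB t, invOf_mul_cancel_left,
        invOf_mul_self, mul_one]
  · rw [key_deriv _ _ _ (deriv_mul_left T T' hT (⅟F) α)]
    constructor
    · intro h t
      rw [h t]
      rw [Matrix.add_mul, Matrix.mul_add, one_mul, mul_one,
        smul_mul_assoc, mul_smul_comm, add_sub_add_left_eq_sub, ← smul_sub]
      congr 1
      rw [Matrix.mul_sub]
      simp only [mul_assoc]
      rw [← mul_assoc (B2 t), ← hBF t, mul_assoc]
    · intro h t
      have h1 := h t
      rw [Matrix.add_mul, Matrix.mul_add, one_mul, mul_one,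
        smul_mul_assoc, mul_smul_comm] at h1
      have h2 : ⅟F * T' t = ⅟F * T t * B2 t - B2 t * (⅟F * T t) := by
        apply hsmul
        rw [smul_sub, ← h1]
        abel
      have h4 : T' t = F * (⅟F * T t * B2 t - B2 t * (⅟F * T t)) := by
        rw [← h2, mul_invOf_cancel_left]
      rw [h4, show B2 t * (⅟F * T t) = ⅟F * (B1 t * T t) by
        rw [← mul_assoc, ← hBF t, mul_assoc]]
      simp only [Matrix.mul_sub, mul_assoc, mul_invOf_cancel_left]
end

section
/- Let g = g₊ ⊕ g₋ be a direct sum decomposition of an associative algebra g (with unit) into two subalgebras, with projections π±, and let 𝓕 ∈ g be invertible. Define g₍₊₎ = 𝓕g₊ and g₍₋₎ = 𝓕g₋. Then g = g₍₊₎ ⊕ g₍₋₎ as linear spaces, the operator R₁(X) = 𝓕·R(𝓕⁻¹X) with R = π₊ − π₋ equals P₍₊₎ − P₍₋₎ for the projections in the new decomposition, and if additionally X𝓕Y ∈ g₊ for all X,Y ∈ g₊ and X𝓕Y ∈ g₋ for all X,Y ∈ g₋, then g₍₊₎ and g₍₋₎ are subalgebras of g. -/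
/-- Let `g = g₊ ⊕ g₋` be a decomposition of a unital associative algebra
into two subalgebras with projections `π±`, and let `𝓕` be invertible. Then
`g₍₊₎ = 𝓕g₊` and `g₍₋₎ = 𝓕g₋` give a direct decomposition of `g`, the operator
`R₁(X) = 𝓕·R(𝓕⁻¹X)` (with `R = π₊ − π₋`) equals `P₍₊₎ − P₍₋₎` for the new projections,
and if `X𝓕Y ∈ g±` for `X,Y ∈ g±`, then `g₍₊₎`, `g₍₋₎` are subalgebras. -/
theorem stmt8 {K A : Type*} [Field K] [Ring A] [Algebra K A]
    (gp gm : Submodule K A) (hcompl : IsCompl gp gm)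
    (πp πm : A →ₗ[K] A)
    (hmemp : ∀ x, πp x ∈ gp) (hmemm : ∀ x, πm x ∈ gm)
    (hsum : ∀ x, πp x + πm x = x)
    (hidp : ∀ x ∈ gp, πp x = x) (hidm : ∀ x ∈ gm, πp x = 0)
    (F : A) [Invertible F] :
    IsCompl (gp.map (LinearMap.mulLeft K F)) (gm.map (LinearMap.mulLeft K F)) ∧
    (∀ X : A, ∃ u ∈ gp.map (LinearMap.mulLeft K F), ∃ v ∈ gm.map (LinearMap.mulLeft K F),
        X = u + v ∧ F * (πp (⅟F * X) - πm (⅟F * X)) = u - v) ∧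
    ((∀ x ∈ gp, ∀ y ∈ gp, x * F * y ∈ gp) → (∀ x ∈ gm, ∀ y ∈ gm, x * F * y ∈ gm) →
      ((∀ u ∈ gp.map (LinearMap.mulLeft K F), ∀ v ∈ gp.map (LinearMap.mulLeft K F),
          u * v ∈ gp.map (LinearMap.mulLeft K F)) ∧
       (∀ u ∈ gm.map (LinearMap.mulLeft K F), ∀ v ∈ gm.map (LinearMap.mulLeft K F),
          u * v ∈ gm.map (LinearMap.mulLeft K F)))) := by
  refine ⟨⟨?_, ?_⟩, ?_, ?_⟩
  · rw [Submodule.disjoint_def]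
    rintro x ⟨a, ha, rfl⟩ hx
    obtain ⟨b, hb, hab⟩ := hx
    simp only [LinearMap.mulLeft_apply] at hab ⊢
    have hba : b = a := by
      have := congrArg (fun t => ⅟F * t) hab
      simpa [← mul_assoc] using this
    subst hba
    have : b ∈ gp ⊓ gm := ⟨ha, hb⟩
    rw [hcompl.inf_eq_bot, Submodule.mem_bot] at this
    simp [this]
  · rw [codisjoint_iff, eq_top_iff]
    intro x _
    have hx : x = F * πp (⅟F * x) + F * πm (⅟F * x) := by
      rw [← mul_add, hsum, ← mul_assoc, mul_invOf_self, one_mul]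
    rw [hx]
    exact Submodule.add_mem_sup ⟨_, hmemp _, rfl⟩ ⟨_, hmemm _, rfl⟩
  · intro X
    refine ⟨F * πp (⅟F * X), ⟨_, hmemp _, rfl⟩, F * πm (⅟F * X), ⟨_, hmemm _, rfl⟩, ?_, ?_⟩
    · rw [← mul_add, hsum, ← mul_assoc, mul_invOf_self, one_mul]
    · rw [mul_sub]
  · intro hp hm
    constructor
    · rintro _ ⟨a, ha, rfl⟩ _ ⟨b, hb, rfl⟩
      exact ⟨a * F * b, hp a ha b hb, by simp [LinearMap.mulLeft_apply, mul_assoc]⟩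
    · rintro _ ⟨a, ha, rfl⟩ _ ⟨b, hb, rfl⟩
      exact ⟨a * F * b, hm a ha b hb, by simp [LinearMap.mulLeft_apply, mul_assoc]⟩
end

section
/- The matrix differential equation Ṫ = T𝓑₂ − 𝓑₁T, with T the lattice-KP Lax matrix and 𝓑₁, 𝓑₂ the matrices with entries b_k/(1+αb_k) on the diagonal and 1/(1+αb_k) (resp. 1/(1+αb_{k+1})) times λ on the subdiagonal, is equivalent to the system ḃ_k = a_k^{(1)}/(1+αb_{k+1}) − a_{k−1}^{(1)}/(1+αb_{k−1}); ȧ_k^{(j)} = a_k^{(j)}(b_{k+j}/(1+αb_{k+j}) − b_k/(1+αb_k)) + (a_k^{(j+1)}/(1+αb_{k+j+1}) − a_{k−1}^{(j+1)}/(1+αb_{k−1})) for 1 ≤ j ≤ m−1; ȧ_k^{(m)} = a_k^{(m)}(b_{k+m}/(1+αb_{k+m}) − b_k/(1+αb_k)). -/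
/-- Cyclic lower shift `Σ_k E_{k+1,k}` over `ZMod N`. -/
def cycZ12 (N : ℕ) : Matrix (ZMod N) (ZMod N) ℝ :=
  Matrix.of fun p q => if p = q + 1 then 1 else 0

/-- `Σ_k a_k^{(j)} E_{k,k+j}` (paper level `(j:ℕ)+1`). -/
def aUp12 (N m : ℕ) (a : Fin m → ZMod N → ℝ) (j : Fin m) : Matrix (ZMod N) (ZMod N) ℝ :=
  Matrix.of fun p q => if q = p + (((j : ℕ) + 1 : ℕ) : ZMod N) then a j p else 0

/-- The lattice KP Lax matrix. -/
noncomputable def TKP12 (N m : ℕ) (b : ZMod N → ℝ) (a : Fin m → ZMod N → ℝ)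
    (lam : ℝ) : Matrix (ZMod N) (ZMod N) ℝ :=
  lam • cycZ12 N + Matrix.diagonal b
    + ∑ j : Fin m, (lam ^ (-(((j : ℕ) : ℤ) + 1))) • aUp12 N m a j

/-- `𝓑₁ = Σ (b_k/(1+αb_k)) E_kk + λ Σ (1/(1+αb_k)) E_{k+1,k}`. -/
noncomputable def calB1 (N : ℕ) (α : ℝ) (b : ZMod N → ℝ) (lam : ℝ) :
    Matrix (ZMod N) (ZMod N) ℝ :=
  Matrix.diagonal (fun k => b k / (1 + α * b k))
    + lam • Matrix.of (fun p q : ZMod N => if p = q + 1 then 1 / (1 + α * b q) else 0)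

/-- `𝓑₂ = Σ (b_k/(1+αb_k)) E_kk + λ Σ (1/(1+αb_{k+1})) E_{k+1,k}`. -/
noncomputable def calB2 (N : ℕ) (α : ℝ) (b : ZMod N → ℝ) (lam : ℝ) :
    Matrix (ZMod N) (ZMod N) ℝ :=
  Matrix.diagonal (fun k => b k / (1 + α * b k))
    + lam • Matrix.of (fun p q : ZMod N => if p = q + 1 then 1 / (1 + α * b p) else 0)

section aux
variable (N m : ℕ) [NeZero N] (α : ℝ) (b : ZMod N → ℝ) (a : Fin m → ZMod N → ℝ)

lemma hsum2 (g : ZMod N → ℝ) (x : ZMod N) :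
    (∑ r : ZMod N, if r = x then g r else 0) = g x := by
  rw [Fintype.sum_eq_single x]
  · rw [if_pos rfl]
  · intro r hr; rw [if_neg hr]

lemma hsum3 (g : ZMod N → ℝ) (P : ZMod N → Prop) [DecidablePred P] (p : ZMod N) :
    (∑ r : ZMod N, if P r then if p = r + 1 then g r else 0 else 0)
      = if P (p - 1) then g (p - 1) else 0 := by
  rw [Fintype.sum_eq_single (p - 1)]
  · have : p = p - 1 + 1 := by ring
    by_cases hP : P (p - 1)
    · simp only [if_pos hP, if_pos this]
    · rw [if_neg hP, if_neg hP]
  · intro r hr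
    have h2 : ¬ p = r + 1 := fun hc => hr (by rw [hc]; ring)
    by_cases hP : P r
    · rw [if_pos hP, if_neg h2]
    · rw [if_neg hP]

noncomputable def s1M : Matrix (ZMod N) (ZMod N) ℝ :=
  Matrix.of (fun p q : ZMod N => if p = q + 1 then 1 / (1 + α * b q) else 0)

noncomputable def s2M : Matrix (ZMod N) (ZMod N) ℝ :=
  Matrix.of (fun p q : ZMod N => if p = q + 1 then 1 / (1 + α * b p) else 0)

noncomputable def betaF (k : ZMod N) : ℝ := b k / (1 + α * b k)

noncomputable def m1M (j : Fin m) : Matrix (ZMod N) (ZMod N) ℝ :=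
  Matrix.of fun p q => if q = p + (((j : ℕ) + 1 : ℕ) : ZMod N) then
    a j p * (betaF N α b (p + (((j : ℕ) + 1 : ℕ) : ZMod N)) - betaF N α b p) else 0

noncomputable def m2M (j : Fin m) : Matrix (ZMod N) (ZMod N) ℝ :=
  Matrix.of fun p q => if q = p + (((j : ℕ) : ℕ) : ZMod N) then
    a j p / (1 + α * b (p + (((j : ℕ) + 1 : ℕ) : ZMod N)))
      - a j (p - 1) / (1 + α * b (p - 1)) else 0

lemma lemA : cycZ12 N * s2M N α b = s1M N α b * cycZ12 N := by
  ext p q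
  simp only [Matrix.mul_apply, cycZ12, s1M, s2M, Matrix.of_apply, ite_mul, mul_ite, one_mul,
    mul_one, zero_mul, mul_zero]

lemma lemB : cycZ12 N * Matrix.diagonal (betaF N α b) + Matrix.diagonal b * s2M N α b
    = Matrix.diagonal (betaF N α b) * cycZ12 N + s1M N α b * Matrix.diagonal b := by
  ext p q
  simp only [Matrix.add_apply, Matrix.mul_diagonal, Matrix.diagonal_mul, cycZ12, s1M, s2M,
    Matrix.of_apply, betaF, ite_mul, mul_ite, zero_mul, mul_zero, one_mul, mul_one]
  by_cases h : p = q + 1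
  · rw [if_pos h, if_pos h, if_pos h, if_pos h, h]; ring
  · rw [if_neg h, if_neg h, if_neg h, if_neg h]

lemma lemC (j : Fin m) : aUp12 N m a j * Matrix.diagonal (betaF N α b)
    - Matrix.diagonal (betaF N α b) * aUp12 N m a j = m1M N m α b a j := by
  ext p q
  simp only [Matrix.sub_apply, Matrix.mul_diagonal, Matrix.diagonal_mul, aUp12, m1M,
    Matrix.of_apply, ite_mul, mul_ite, zero_mul, mul_zero]
  by_cases h : q = p + (((j : ℕ) + 1 : ℕ) : ZMod N)
  · rw [if_pos h, if_pos h, if_pos h, h]; unfold betaF; ring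
  · rw [if_neg h, if_neg h, if_neg h]; ring

lemma lemD (j : Fin m) : aUp12 N m a j * s2M N α b - s1M N α b * aUp12 N m a j
    = m2M N m α b a j := by
  have hcast : ((((j : ℕ) + 1 : ℕ)) : ZMod N) = ((j : ℕ) : ZMod N) + 1 := by push_cast; ring
  ext p q
  simp only [Matrix.sub_apply, Matrix.mul_apply, aUp12, s1M, s2M, m2M, Matrix.of_apply,
    hcast, ite_mul, mul_ite, zero_mul, mul_zero]
  rw [hsum2, hsum3]
  set c : ZMod N := ((j : ℕ) : ZMod N)
  by_cases h : q = p + c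
  · have h1 : q + 1 = p + (c + 1) := by rw [h]; ring
    have h2 : q = p - 1 + (c + 1) := by rw [h]; ring
    rw [if_pos h1, if_pos h2, if_pos h, h]; ring_nf
  · have h1 : ¬ q + 1 = p + (c + 1) := by
      intro hc; apply h
      have h' : q + 1 = (p + c) + 1 := by rw [hc]; ring
      exact add_left_injective 1 h'
    have h2 : ¬ q = p - 1 + (c + 1) := by
      intro hc; exact h (by rw [hc]; ring)
    rw [if_neg h1, if_neg h2, if_neg h]; ring

lemma expand12 (lam : ℝ) (hlam : lam ≠ 0) :
    TKP12 N m b a lam * calB2 N α b lam - calB1 N α b lam * TKP12 N m b a lam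
      = ∑ j : Fin m, (lam ^ (-(((j : ℕ) : ℤ) + 1))) • m1M N m α b a j
        + ∑ j : Fin m, (lam ^ (-((j : ℕ) : ℤ))) • m2M N m α b a j := by
  have e1 : calB1 N α b lam = Matrix.diagonal (betaF N α b) + lam • s1M N α b := rfl
  have e2 : calB2 N α b lam = Matrix.diagonal (betaF N α b) + lam • s2M N α b := rfl
  have hDD : Matrix.diagonal b * Matrix.diagonal (betaF N α b)
      = Matrix.diagonal (betaF N α b) * Matrix.diagonal b := by
    rw [Matrix.diagonal_mul_diagonal, Matrix.diagonal_mul_diagonal]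
    exact congrArg _ (funext fun k => mul_comm (b k) (betaF N α b k))
  have hB' : Matrix.diagonal b * s2M N α b
      = Matrix.diagonal (betaF N α b) * cycZ12 N + s1M N α b * Matrix.diagonal b
        - cycZ12 N * Matrix.diagonal (betaF N α b) := by
    rw [eq_sub_iff_add_eq, add_comm, lemB]
  have hC : ∀ j : Fin m, aUp12 N m a j * Matrix.diagonal (betaF N α b)
      = Matrix.diagonal (betaF N α b) * aUp12 N m a j + m1M N m α b a j := fun j => by
    rw [← lemC N m α b a j]; abel
  have hD : ∀ j : Fin m, aUp12 N m a j * s2M N α b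
      = s1M N α b * aUp12 N m a j + m2M N m α b a j := fun j => by
    rw [← lemD N m α b a j]; abel
  have hpow : ∀ j : Fin m, lam ^ (-(((j : ℕ) : ℤ) + 1)) * lam = lam ^ (-((j : ℕ) : ℤ)) := by
    intro j
    rw [show (-((j:ℕ):ℤ)) = (-(((j:ℕ):ℤ)+1)) + 1 by ring, zpow_add_one₀ hlam]
  have hpow2 : ∀ j : Fin m, lam * lam ^ (-(((j : ℕ) : ℤ) + 1)) = lam ^ (-((j : ℕ) : ℤ)) :=
    fun j => by rw [mul_comm]; exact hpow j
  rw [e1, e2, TKP12]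
  simp only [add_mul, mul_add, smul_mul_assoc, mul_smul_comm, smul_smul, Finset.sum_mul,
    Finset.mul_sum, Finset.smul_sum, lemA, hDD, hB', hC, hD, smul_add, smul_sub,
    Finset.sum_add_distrib, Finset.sum_sub_distrib, smul_smul, hpow, hpow2]
  abel

end aux

lemma vanish12 (n : ℕ) (c : Fin (n+1) → ℝ)
    (h : ∀ lam : ℝ, lam ≠ 0 → ∑ i : Fin (n+1), c i * lam ^ (-((i : ℕ) : ℤ)) = 0) :
    ∀ i, c i = 0 := by
  set P : Polynomial ℝ := ∑ i : Fin (n+1), Polynomial.C (c i) * Polynomial.X ^ (n - (i : ℕ)) with hP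
  have hroot : ∀ lam : ℝ, lam ≠ 0 → P.eval lam = 0 := by
    intro lam hlam
    have h0 := h lam hlam
    have : P.eval lam = lam ^ n * ∑ i : Fin (n+1), c i * lam ^ (-((i : ℕ) : ℤ)) := by
      rw [hP, Polynomial.eval_finset_sum, Finset.mul_sum]
      refine Finset.sum_congr rfl fun i _ => ?_
      have hi : (i : ℕ) ≤ n := Nat.lt_succ_iff.mp i.isLt
      simp only [Polynomial.eval_mul, Polynomial.eval_C, Polynomial.eval_pow, Polynomial.eval_X]
      rw [show (lam:ℝ) ^ (n - (i:ℕ)) = lam ^ ((n : ℤ) - (i:ℕ)) by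
        rw [← zpow_natCast]; congr 1; omega]
      rw [sub_eq_add_neg, zpow_add₀ hlam, zpow_natCast]
      ring
    rw [this, h0, mul_zero]
  have hP0 : P = 0 := by
    apply Polynomial.eq_zero_of_infinite_isRoot
    apply Set.Infinite.mono (s := {x : ℝ | x ≠ 0})
    · intro x hx; exact hroot x hx
    · apply Set.infinite_of_finite_compl
      have : {x : ℝ | x ≠ 0}ᶜ = {0} := by ext x; simp
      rw [this]; exact Set.finite_singleton 0
  intro i
  have hi : (i : ℕ) ≤ n := Nat.lt_succ_iff.mp i.isLt
  have := congrArg (fun Q => Polynomial.coeff Q (n - (i : ℕ))) hP0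
  simp only [hP, Polynomial.finset_sum_coeff, Polynomial.coeff_C_mul, Polynomial.coeff_X_pow,
    Polynomial.coeff_zero] at this
  rw [Finset.sum_eq_single i] at this
  · simpa using this
  · intro i' _ hne
    have hcond : ¬ (n - (i : ℕ) = n - (i' : ℕ)) := by
      have hi' : (i' : ℕ) ≤ n := Nat.lt_succ_iff.mp i'.isLt
      intro hEq; exact hne (Fin.ext (by omega))
    simp [hcond]
  · simp

lemma vanish12' (n : ℕ) (c : Fin (n+1) → ℝ)
    (h : ∀ lam : ℝ, lam ≠ 0 → ∑ i : Fin (n+1), lam ^ (-((i : ℕ) : ℤ)) * c i = 0) :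
    ∀ i, c i = 0 :=
  vanish12 n c fun lam hl => by
    rw [← h lam hl]; exact Finset.sum_congr rfl fun i _ => mul_comm _ _

lemma sum_shift_ext (m : ℕ) (hm : 0 < m) (w : Fin m → ℝ) (d : Fin (m+1) → ℝ) :
    ∑ j : Fin m, d j.castSucc * w j
      = d 0 * w ⟨0, hm⟩
        + ∑ j : Fin m, d j.succ * (if h : (j : ℕ) + 1 < m then w ⟨(j : ℕ) + 1, h⟩ else 0) := by
  have h1 : ∑ i : Fin (m+1), d i * (if h : (i : ℕ) < m then w ⟨(i : ℕ), h⟩ else 0)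
      = ∑ j : Fin m, d j.castSucc * w j := by
    rw [Fin.sum_univ_castSucc]
    simp
  have h2 : ∑ i : Fin (m+1), d i * (if h : (i : ℕ) < m then w ⟨(i : ℕ), h⟩ else 0)
      = d 0 * w ⟨0, hm⟩
        + ∑ j : Fin m, d j.succ * (if h : (j : ℕ) + 1 < m then w ⟨(j : ℕ) + 1, h⟩ else 0) := by
    rw [Fin.sum_univ_succ]
    simp [hm]
  rw [← h1, h2]

noncomputable def Zc12 (N m : ℕ) (α : ℝ) (b bdot : ZMod N → ℝ)
    (a adot : Fin m → ZMod N → ℝ) (p q : ZMod N) (i : Fin (m+1)) : ℝ :=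
  (i.cases (if p = q then bdot p else 0)
      (fun j : Fin m => (if q = p + (((j : ℕ) + 1 : ℕ) : ZMod N) then adot j p else 0)
        - m1M N m α b a j p q))
    - (if h : (i : ℕ) < m then m2M N m α b a ⟨(i : ℕ), h⟩ p q else 0)

lemma key12 (N m : ℕ) [NeZero N] (hm : 0 < m) (α : ℝ) (b bdot : ZMod N → ℝ)
    (a adot : Fin m → ZMod N → ℝ) (lam : ℝ) (p q : ZMod N) :
    (Matrix.diagonal bdot + ∑ j : Fin m, (lam ^ (-(((j : ℕ) : ℤ) + 1))) • aUp12 N m adot j) p q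
      - (∑ j : Fin m, (lam ^ (-(((j : ℕ) : ℤ) + 1))) • m1M N m α b a j
          + ∑ j : Fin m, (lam ^ (-((j : ℕ) : ℤ))) • m2M N m α b a j) p q
      = ∑ i : Fin (m+1), lam ^ (-((i : ℕ) : ℤ)) * Zc12 N m α b bdot a adot p q i := by
  have hsplit := sum_shift_ext m hm (fun j => m2M N m α b a j p q)
    (fun i => lam ^ (-((i : ℕ) : ℤ)))
  simp only [Fin.coe_castSucc, Fin.val_zero, Fin.val_succ, Nat.cast_zero, neg_zero,
    zpow_zero, one_mul, Nat.cast_add, Nat.cast_one] at hsplit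
  simp only [Matrix.add_apply, Matrix.sum_apply, Matrix.smul_apply, smul_eq_mul,
    Matrix.diagonal_apply, Zc12, aUp12, Matrix.of_apply, Nat.cast_add, Nat.cast_one]
  rw [Fin.sum_univ_succ, hsplit]
  simp only [Fin.cases_zero, Fin.cases_succ, Fin.val_zero, Fin.val_succ, Nat.cast_zero,
    neg_zero, zpow_zero, one_mul, Nat.cast_add, Nat.cast_one, dif_pos hm,
    mul_sub, Finset.sum_sub_distrib]
  erw [dif_pos hm]
  ring

/-- the matrix differential equation `Ṫ = T𝓑₂ − 𝓑₁T` is equivalent to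
the rational relativistic perturbation of the lattice KP flow. -/
theorem stmt12 (N m : ℕ) [NeZero N] (hm : 0 < m) (α : ℝ)
    (b bdot : ZMod N → ℝ) (a adot : Fin m → ZMod N → ℝ)
    (hb : ∀ k, 1 + α * b k ≠ 0) :
    (∀ lam : ℝ, lam ≠ 0 →
      Matrix.diagonal bdot
          + ∑ j : Fin m, (lam ^ (-(((j : ℕ) : ℤ) + 1))) • aUp12 N m adot j
        = TKP12 N m b a lam * calB2 N α b lam - calB1 N α b lam * TKP12 N m b a lam)
    ↔ ((∀ k : ZMod N,
          bdot k = a ⟨0, hm⟩ k / (1 + α * b (k + 1))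
            - a ⟨0, hm⟩ (k - 1) / (1 + α * b (k - 1))) ∧
       (∀ (j : Fin m) (k : ZMod N),
         adot j k
           = a j k * (b (k + (((j : ℕ) + 1 : ℕ) : ZMod N))
                 / (1 + α * b (k + (((j : ℕ) + 1 : ℕ) : ZMod N)))
               - b k / (1 + α * b k))
             + ((if h : (j : ℕ) + 1 < m then a ⟨(j : ℕ) + 1, h⟩ k else 0)
                   / (1 + α * b (k + (((j : ℕ) + 1 : ℕ) : ZMod N) + 1))
                - (if h : (j : ℕ) + 1 < m then a ⟨(j : ℕ) + 1, h⟩ (k - 1) else 0)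
                   / (1 + α * b (k - 1))))) := by
  have hexp := expand12 N m α b a
  have hZiff : (∀ p q : ZMod N, ∀ i, Zc12 N m α b bdot a adot p q i = 0) ↔
      ((∀ k : ZMod N,
          bdot k = a ⟨0, hm⟩ k / (1 + α * b (k + 1))
            - a ⟨0, hm⟩ (k - 1) / (1 + α * b (k - 1))) ∧
       (∀ (j : Fin m) (k : ZMod N),
         adot j k
           = a j k * (b (k + (((j : ℕ) + 1 : ℕ) : ZMod N))
                 / (1 + α * b (k + (((j : ℕ) + 1 : ℕ) : ZMod N)))
               - b k / (1 + α * b k))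
             + ((if h : (j : ℕ) + 1 < m then a ⟨(j : ℕ) + 1, h⟩ k else 0)
                   / (1 + α * b (k + (((j : ℕ) + 1 : ℕ) : ZMod N) + 1))
                - (if h : (j : ℕ) + 1 < m then a ⟨(j : ℕ) + 1, h⟩ (k - 1) else 0)
                   / (1 + α * b (k - 1))))) := by
    constructor
    · intro hz
      constructor
      · intro k
        have h0 := hz k k 0
        simp only [Zc12, Fin.cases_zero, Fin.val_zero, dif_pos hm, m2M, Matrix.of_apply,
          Nat.cast_zero, Nat.cast_one, add_zero, if_pos rfl, zero_add, Nat.cast_ofNat] at h0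
        simpa [sub_eq_zero] using h0
      · intro j k
        have h0 := hz k (k + (((j : ℕ) + 1 : ℕ) : ZMod N)) j.succ
        simp only [Zc12, Fin.cases_succ, Fin.val_succ, m1M, m2M, Matrix.of_apply,
          if_pos rfl] at h0
        simp only [if_true, betaF] at h0
        rw [sub_sub, sub_eq_zero] at h0
        rw [h0]
        by_cases h : (j : ℕ) + 1 < m
        · simp only [dif_pos h]
          push_cast
          ring
        · simp only [dif_neg h]
          push_cast
          ring
    · rintro ⟨h1, h2⟩ p q i
      induction i using Fin.cases with
      | zero =>
        simp only [Zc12, Fin.cases_zero, Fin.val_zero, dif_pos hm, m2M, Matrix.of_apply,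
          Nat.cast_zero, Nat.cast_one, add_zero, zero_add]
        by_cases hpq : p = q
        · subst hpq
          simp only [if_pos rfl]
          rw [sub_eq_zero]
          simpa using h1 p
        · have hqp : ¬ q = p := fun hc => hpq hc.symm
          simp [hpq, hqp]
      | succ j =>
        simp only [Zc12, Fin.cases_succ, Fin.val_succ, m1M, m2M, Matrix.of_apply]
        by_cases hq : q = p + (((j : ℕ) + 1 : ℕ) : ZMod N)
        · simp only [if_pos hq]
          have hj := h2 j p
          by_cases h : (j : ℕ) + 1 < m
          · simp only [dif_pos h] at hj ⊢
            rw [hj]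
            simp only [betaF]
            push_cast
            ring
          · simp only [dif_neg h] at hj ⊢
            rw [hj]
            simp only [betaF]
            push_cast
            ring
        · push_cast at hq ⊢
          simp [hq]
  rw [← hZiff]
  constructor
  · intro H p q
    apply vanish12' m
    intro lam hlam
    have h1 := congrFun (congrFun ((H lam hlam).trans (hexp lam hlam)) p) q
    rw [← key12 N m hm α b bdot a adot lam p q, h1, sub_self]
  · intro hz lam hlam
    rw [hexp lam hlam]
    ext p q
    refine sub_eq_zero.mp ?_
    rw [key12 N m hm α b bdot a adot lam p q]
    simp [hz p q]
end

section
/- The Poisson bracket on ℝ^{(m+1)N} defined by the only nonvanishing elementary brackets {b_k, a_k^{(j)}}₁ = −a_k^{(j)}, {a_k^{(j)}, b_{k+j}}₁ = −a_k^{(j)}, and {a_k^{(i)}, a_{k+i}^{(j)}}₁ = −a_k^{(i+j)} (for i+j ≤ m) satisfies the Jacobi identity, i.e. defines a Poisson structure. -/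
/-- Coordinate index set: `inl k ↦ b_k`, `inr (j,k) ↦ a_k^{(j)}` with paper level `(j:ℕ)+1`. -/
abbrev TLIdx (N m : ℕ) := ZMod N ⊕ (Fin m × ZMod N)

/-- Structure matrix of the linear bracket: `{b_k, a_k^{(j)}}₁ = −a_k^{(j)}`,
`{a_k^{(j)}, b_{k+j}}₁ = −a_k^{(j)}`, `{a_k^{(i)}, a_{k+i}^{(j)}}₁ = −a_k^{(i+j)}`
(for `i+j ≤ m`), all other elementary brackets vanishing. -/
def TLP (N m : ℕ) (u v : TLIdx N m) (p : TLIdx N m → ℝ) : ℝ :=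
  match u, v with
  | .inl _, .inl _ => 0
  | .inl k, .inr (j, l) =>
      (if l = k then -p (.inr (j, l)) else 0) +
      (if k = l + (((j : ℕ) + 1 : ℕ) : ZMod N) then p (.inr (j, l)) else 0)
  | .inr (j, l), .inl k =>
      (if l = k then p (.inr (j, l)) else 0) +
      (if k = l + (((j : ℕ) + 1 : ℕ) : ZMod N) then -p (.inr (j, l)) else 0)
  | .inr (i, k), .inr (j, l) =>
      (if h : (i : ℕ) + (j : ℕ) + 2 ≤ m ∧ l = k + (((i : ℕ) + 1 : ℕ) : ZMod N)
        then -p (.inr (⟨(i : ℕ) + (j : ℕ) + 1, by omega⟩, k)) else 0) +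
      (if h : (i : ℕ) + (j : ℕ) + 2 ≤ m ∧ k = l + (((j : ℕ) + 1 : ℕ) : ZMod N)
        then p (.inr (⟨(i : ℕ) + (j : ℕ) + 1, by omega⟩, l)) else 0)

/-! ### Auxiliary matrices realizing the bracket

`Mk N m k d` is a matrix model for the elementary "shift by `d` at site `k`" operator; all
truncation is automatic (`Mk` vanishes for `d > m`), and the structure constants of `TLP`
are realized by commutators of these matrices. -/

private def Mk (N m : ℕ) (k : ZMod N) (d : ℕ) :
    Matrix (ZMod N × Fin (m+1)) (ZMod N × Fin (m+1)) ℝ :=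
  fun a b => if a.1 = k ∧ b.1 = k + (d : ZMod N) ∧ (a.2 : ℕ) = (b.2 : ℕ) + d then 1 else 0

private lemma Mk_apply (N m : ℕ) (k : ZMod N) (d : ℕ) (a1 b1 : ZMod N) (a2 b2 : Fin (m+1)) :
    Mk N m k d (a1, a2) (b1, b2)
      = if a1 = k ∧ b1 = k + (d : ZMod N) ∧ (a2 : ℕ) = (b2 : ℕ) + d then 1 else 0 := rfl

private lemma Mk_zero (N m : ℕ) (k : ZMod N) (d : ℕ) (hd : m < d) : Mk N m k d = 0 := by
  ext a b
  simp only [Mk, Matrix.zero_apply, ite_eq_right_iff]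
  rintro ⟨-, -, h⟩
  exact absurd h (by have := a.2.isLt; omega)

private lemma Mk_mul (N m : ℕ) [NeZero N] (k k' : ZMod N) (d1 d2 : ℕ) :
    Mk N m k d1 * Mk N m k' d2 =
      if k' = k + (d1 : ZMod N) then Mk N m k (d1 + d2) else 0 := by
  ext ⟨a1, a2⟩ ⟨b1, b2⟩
  rw [Matrix.mul_apply]
  by_cases h1 : k' = k + (d1 : ZMod N)
  · rw [if_pos h1]
    by_cases hm : a1 = k ∧ b1 = k + ((d1 + d2 : ℕ) : ZMod N) ∧ (a2 : ℕ) = (b2 : ℕ) + (d1 + d2)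
    · obtain ⟨e1, e2, e3⟩ := hm
      have hlt : (b2 : ℕ) + d2 < m + 1 := by have := a2.isLt; omega
      rw [Mk_apply, if_pos ⟨e1, e2, e3⟩]
      rw [Finset.sum_eq_single (k + (d1 : ZMod N), (⟨(b2 : ℕ) + d2, hlt⟩ : Fin (m+1)))]
      · rw [Mk_apply, Mk_apply,
          if_pos ⟨e1, rfl, show (a2 : ℕ) = (b2 : ℕ) + d2 + d1 by omega⟩,
          if_pos ⟨h1.symm, by rw [h1, e2]; push_cast; ring, rfl⟩, one_mul]
      · rintro ⟨c1, c2⟩ - hne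
        rw [Mk_apply, Mk_apply]
        split_ifs with p q <;> try ring
        exact absurd (Prod.ext p.2.1
          (Fin.ext (by have h3 := q.2.2; simp only [Fin.val_mk]; omega))) hne
      · simp
    · rw [Mk_apply, if_neg hm]
      apply Finset.sum_eq_zero
      rintro ⟨c1, c2⟩ -
      rw [Mk_apply, Mk_apply]
      split_ifs with p q <;> try ring
      exfalso
      refine hm ⟨p.1, ?_, by have := p.2.2; have := q.2.2; omega⟩
      rw [q.2.1, h1]; push_cast; ring
  · rw [if_neg h1]
    rw [show (0 : Matrix (ZMod N × Fin (m+1)) (ZMod N × Fin (m+1)) ℝ) (a1,a2) (b1,b2) = 0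
      from rfl]
    apply Finset.sum_eq_zero
    rintro ⟨c1, c2⟩ -
    rw [Mk_apply, Mk_apply]
    split_ifs with p q <;> try ring
    exact absurd (q.1.symm.trans p.2.1) h1

/-- Matrix realization of the coordinate functions. -/
private def phi (N m : ℕ) : TLIdx N m → Matrix (ZMod N × Fin (m+1)) (ZMod N × Fin (m+1)) ℝ
  | .inl k => -(Mk N m k 0)
  | .inr (j, l) => -(Mk N m l ((j : ℕ) + 1))

/-- The coordinate-readout functional. -/
private def lam (N m : ℕ) (x : TLIdx N m)
    (X : Matrix (ZMod N × Fin (m+1)) (ZMod N × Fin (m+1)) ℝ) : ℝ :=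
  match x with
  | .inl k => -(X (k, ⟨0, Nat.succ_pos m⟩) (k, ⟨0, Nat.succ_pos m⟩))
  | .inr (j, l) => -(X (l, ⟨(j:ℕ)+1, Nat.succ_lt_succ j.isLt⟩)
      (l + (((j:ℕ)+1 : ℕ) : ZMod N), ⟨0, Nat.succ_pos m⟩))

section Aux

variable (N m : ℕ) [NeZero N]

private lemma sum_ite_smul (C : Prop) [Decidable C] (f : TLIdx N m → ℝ)
    (g : TLIdx N m → Matrix (ZMod N × Fin (m+1)) (ZMod N × Fin (m+1)) ℝ) :
    (∑ x : TLIdx N m, (if C then f x else 0) • g x)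
      = if C then ∑ x : TLIdx N m, f x • g x else 0 := by
  split <;> simp

private lemma sum_dite_smul (C : Prop) [Decidable C] (f : C → TLIdx N m → ℝ)
    (g : TLIdx N m → Matrix (ZMod N × Fin (m+1)) (ZMod N × Fin (m+1)) ℝ) :
    (∑ x : TLIdx N m, (if h : C then f h x else 0) • g x)
      = if h : C then ∑ x : TLIdx N m, f h x • g x else 0 := by
  split <;> simp

private lemma sum_single_smul (z0 : TLIdx N m)
    (g : TLIdx N m → Matrix (ZMod N × Fin (m+1)) (ZMod N × Fin (m+1)) ℝ) :
    (∑ x : TLIdx N m, (if z0 = x then (1:ℝ) else 0) • g x) = g z0 := by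
  simp [ite_smul, Finset.sum_ite_eq]

private lemma sum_single_neg_smul (z0 : TLIdx N m)
    (g : TLIdx N m → Matrix (ZMod N × Fin (m+1)) (ZMod N × Fin (m+1)) ℝ) :
    (∑ x : TLIdx N m, (-if z0 = x then (1:ℝ) else 0) • g x) = -(g z0) := by
  simp [ite_smul, Finset.sum_ite_eq]

private lemma sum_add_smul (f g : TLIdx N m → ℝ)
    (h : TLIdx N m → Matrix (ZMod N × Fin (m+1)) (ZMod N × Fin (m+1)) ℝ) :
    (∑ x : TLIdx N m, (f x + g x) • h x)
      = (∑ x : TLIdx N m, f x • h x) + ∑ x : TLIdx N m, g x • h x := by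
  rw [← Finset.sum_add_distrib]; exact Finset.sum_congr rfl fun x _ => add_smul _ _ _

/-- The commutator of the matrix realizations is given exactly by the structure constants. -/
private lemma bracket_phi (u v : TLIdx N m) :
    phi N m u * phi N m v - phi N m v * phi N m u
      = ∑ z : TLIdx N m, TLP N m u v (Pi.single z 1) • phi N m z := by
  cases u with
  | inl k => cases v with
    | inl k' =>
      simp only [phi, TLP, neg_mul_neg, Mk_mul, zero_smul, Finset.sum_const_zero]
      split_ifs with h1 h2 h2 <;> first | (subst_eqs; simp_all) | simp_all
    | inr jl =>
      obtain ⟨j, l⟩ := jl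
      rw [show phi N m (.inl k) = -(Mk N m k 0) from rfl,
          show phi N m (.inr (j,l)) = -(Mk N m l ((j:ℕ)+1)) from rfl]
      simp only [neg_mul_neg, Mk_mul, TLP, Pi.single_apply, Nat.cast_zero, add_zero, zero_add]
      rw [sum_add_smul, sum_ite_smul, sum_ite_smul, sum_single_smul, sum_single_neg_smul]
      rw [show phi N m (.inr (j,l)) = -(Mk N m l ((j:ℕ)+1)) from rfl]
      split_ifs with h1 h2 h2 <;> subst_eqs <;> abel
  | inr il =>
    obtain ⟨i, k⟩ := il
    cases v with
    | inl k' =>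
      rw [show phi N m (.inl k') = -(Mk N m k' 0) from rfl,
          show phi N m (.inr (i,k)) = -(Mk N m k ((i:ℕ)+1)) from rfl]
      simp only [neg_mul_neg, Mk_mul, TLP, Pi.single_apply, Nat.cast_zero, add_zero, zero_add]
      rw [sum_add_smul, sum_ite_smul, sum_ite_smul, sum_single_smul, sum_single_neg_smul]
      rw [show phi N m (.inr (i,k)) = -(Mk N m k ((i:ℕ)+1)) from rfl]
      split_ifs with h1 h2 h2 <;> subst_eqs <;> (try rw [← h2]) <;> abel
    | inr jl =>
      obtain ⟨j, l⟩ := jl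
      rw [show phi N m (.inr (i,k)) = -(Mk N m k ((i:ℕ)+1)) from rfl,
          show phi N m (.inr (j,l)) = -(Mk N m l ((j:ℕ)+1)) from rfl]
      simp only [neg_mul_neg, Mk_mul, TLP, Pi.single_apply]
      rw [sum_add_smul, sum_dite_smul, sum_dite_smul]
      simp only [sum_single_smul, sum_single_neg_smul]
      by_cases hm2 : (i:ℕ) + (j:ℕ) + 2 ≤ m
      · simp only [hm2, true_and, dif_pos, phi, Fin.val_mk]
        rw [show (i:ℕ)+1+((j:ℕ)+1) = (i:ℕ)+(j:ℕ)+1+1 from by omega,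
            show (j:ℕ)+1+((i:ℕ)+1) = (i:ℕ)+(j:ℕ)+1+1 from by omega]
        split_ifs with h1 h2 h2 <;> subst_eqs <;> abel
      · have hf : ¬((i:ℕ) + (j:ℕ) + 2 ≤ m ∧ l = k + (((i:ℕ)+1 : ℕ) : ZMod N)) :=
          fun h => hm2 h.1
        have hf' : ¬((i:ℕ) + (j:ℕ) + 2 ≤ m ∧ k = l + (((j:ℕ)+1 : ℕ) : ZMod N)) :=
          fun h => hm2 h.1
        rw [dif_neg hf, dif_neg hf',
            show (i:ℕ)+1+((j:ℕ)+1) = (i:ℕ)+(j:ℕ)+2 from by omega,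
            show (j:ℕ)+1+((i:ℕ)+1) = (i:ℕ)+(j:ℕ)+2 from by omega,
            Mk_zero N m k _ (by omega), Mk_zero N m l _ (by omega)]
        simp

private lemma sum_add_mul (f g p : TLIdx N m → ℝ) :
    (∑ x : TLIdx N m, (f x + g x) * p x)
      = (∑ x : TLIdx N m, f x * p x) + ∑ x : TLIdx N m, g x * p x := by
  rw [← Finset.sum_add_distrib]; exact Finset.sum_congr rfl fun x _ => add_mul _ _ _

private lemma sum_ite_mul (C : Prop) [Decidable C] (f p : TLIdx N m → ℝ) :
    (∑ x : TLIdx N m, (if C then f x else 0) * p x)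
      = if C then ∑ x : TLIdx N m, f x * p x else 0 := by
  split <;> simp

private lemma sum_dite_mul (C : Prop) [Decidable C] (f : C → TLIdx N m → ℝ)
    (p : TLIdx N m → ℝ) :
    (∑ x : TLIdx N m, (if h : C then f h x else 0) * p x)
      = if h : C then ∑ x : TLIdx N m, f h x * p x else 0 := by
  split <;> simp

private lemma sum_single_mul (z0 : TLIdx N m) (p : TLIdx N m → ℝ) :
    (∑ x : TLIdx N m, (if z0 = x then (1:ℝ) else 0) * p x) = p z0 := by
  simp [ite_mul, Finset.sum_ite_eq]

private lemma sum_single_neg_mul (z0 : TLIdx N m) (p : TLIdx N m → ℝ) :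
    (∑ x : TLIdx N m, (-if z0 = x then (1:ℝ) else 0) * p x) = -p z0 := by
  simp [ite_mul, Finset.sum_ite_eq]

/-- `TLP` is linear in `p`, with coefficients its values on coordinate vectors. -/
private lemma TLP_eq_sum (u v : TLIdx N m) (p : TLIdx N m → ℝ) :
    TLP N m u v p = ∑ x : TLIdx N m, TLP N m u v (Pi.single x 1) * p x := by
  cases u with
  | inl k => cases v with
    | inl k' => simp [TLP]
    | inr jl =>
      obtain ⟨j, l⟩ := jl
      simp only [TLP, Pi.single_apply]
      rw [sum_add_mul, sum_ite_mul, sum_ite_mul, sum_single_mul, sum_single_neg_mul]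
  | inr il =>
    obtain ⟨i, k⟩ := il
    cases v with
    | inl k' =>
      simp only [TLP, Pi.single_apply]
      rw [sum_add_mul, sum_ite_mul, sum_ite_mul, sum_single_mul, sum_single_neg_mul]
    | inr jl =>
      obtain ⟨j, l⟩ := jl
      simp only [TLP, Pi.single_apply]
      rw [sum_add_mul, sum_dite_mul, sum_dite_mul]
      simp only [sum_single_mul, sum_single_neg_mul]

private lemma fderiv_TLP (u v : TLIdx N m) (p : TLIdx N m → ℝ) (z : TLIdx N m) :
    fderiv ℝ (fun q => TLP N m u v q) p (Pi.single z 1) = TLP N m u v (Pi.single z 1) := by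
  set L : (TLIdx N m → ℝ) →L[ℝ] ℝ :=
    ∑ x : TLIdx N m, TLP N m u v (Pi.single x 1) • ContinuousLinearMap.proj x with hL
  have h2 : (fun q : TLIdx N m → ℝ => TLP N m u v q) = ⇑L := by
    funext q
    rw [TLP_eq_sum]
    simp [hL, ContinuousLinearMap.sum_apply, ContinuousLinearMap.proj_apply, smul_eq_mul]
  rw [h2, ContinuousLinearMap.fderiv]
  rcases z with k | jl <;>
  simp [hL, ContinuousLinearMap.sum_apply, ContinuousLinearMap.proj_apply, smul_eq_mul,
    Pi.single_apply, mul_ite, mul_one, mul_zero, Finset.sum_ite_eq']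

private lemma lam_phi (x z : TLIdx N m) : lam N m x (phi N m z) = if z = x then 1 else 0 := by
  rcases x with k | ⟨j, l⟩ <;> rcases z with k' | ⟨j', l'⟩
  · simp only [lam, phi, Matrix.neg_apply, neg_neg, Mk, Nat.cast_zero, add_zero,
      Sum.inl.injEq]
    by_cases h : k' = k
    · simp [h]
    · simp [h, Ne.symm h]
  · simp only [lam, phi, Matrix.neg_apply, neg_neg, Mk]
    rw [if_neg (by rintro ⟨-, -, h⟩; simp at h), if_neg (by simp)]
  · simp only [lam, phi, Matrix.neg_apply, neg_neg, Mk]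
    rw [if_neg (by rintro ⟨-, -, h⟩; simp at h), if_neg (by simp)]
  · simp only [lam, phi, Matrix.neg_apply, neg_neg, Mk, Sum.inr.injEq, Prod.mk.injEq]
    by_cases hj : j' = j <;> by_cases hl : l' = l
    · subst hj; subst hl; simp
    · rw [if_neg (fun h => hl h.1.symm), if_neg (by tauto)]
    · rw [if_neg (fun h => hj (Fin.ext (by have := h.2.2; simp at this; omega))),
        if_neg (by tauto)]
    · rw [if_neg (fun h => hl h.1.symm), if_neg (by tauto)]

private lemma lam_add (x : TLIdx N m)
    (X Y : Matrix (ZMod N × Fin (m+1)) (ZMod N × Fin (m+1)) ℝ) :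
    lam N m x (X + Y) = lam N m x X + lam N m x Y := by
  rcases x with k | ⟨j, l⟩ <;> simp [lam] <;> ring

private lemma lam_zero (x : TLIdx N m) : lam N m x 0 = 0 := by
  rcases x with k | ⟨j, l⟩ <;> simp [lam]

private lemma lam_sum_smul (x : TLIdx N m) (c : TLIdx N m → ℝ)
    (F : TLIdx N m → Matrix (ZMod N × Fin (m+1)) (ZMod N × Fin (m+1)) ℝ) :
    lam N m x (∑ z : TLIdx N m, c z • F z) = ∑ z : TLIdx N m, c z * lam N m x (F z) := by
  rcases x with k | ⟨j, l⟩ <;>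
    simp [lam, Matrix.sum_apply, Matrix.smul_apply, smul_eq_mul, mul_neg,
      ← Finset.sum_neg_distrib] <;> exact add_comm _ _

/-- The structure constants are read off from commutators via `lam`. -/
private lemma TLP_single_eq_lam (u v z : TLIdx N m) :
    TLP N m u v (Pi.single z 1)
      = lam N m z (phi N m u * phi N m v - phi N m v * phi N m u) := by
  rw [bracket_phi, lam_sum_smul]
  simp [lam_phi, mul_ite, mul_one, mul_zero, Finset.sum_ite_eq']

private lemma claim (a b c : TLIdx N m) (p : TLIdx N m → ℝ) :
    (∑ z : TLIdx N m, TLP N m a z p * TLP N m b c (Pi.single z 1))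
      = ∑ x : TLIdx N m, p x * lam N m x
          (phi N m a * (phi N m b * phi N m c - phi N m c * phi N m b)
            - (phi N m b * phi N m c - phi N m c * phi N m b) * phi N m a) := by
  set D := phi N m b * phi N m c - phi N m c * phi N m b with hD
  have hrec : (∑ z : TLIdx N m, lam N m z D • phi N m z) = D := by
    calc (∑ z : TLIdx N m, lam N m z D • phi N m z)
        = ∑ z : TLIdx N m, TLP N m b c (Pi.single z 1) • phi N m z :=
          Finset.sum_congr rfl fun z _ => by rw [TLP_single_eq_lam, hD]
      _ = D := (bracket_phi N m b c).symm
  calc (∑ z : TLIdx N m, TLP N m a z p * TLP N m b c (Pi.single z 1))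
      = ∑ z : TLIdx N m, ∑ x : TLIdx N m,
          (TLP N m a z (Pi.single x 1) * p x) * TLP N m b c (Pi.single z 1) := by
        refine Finset.sum_congr rfl fun z _ => ?_
        rw [TLP_eq_sum N m a z p, Finset.sum_mul]
    _ = ∑ x : TLIdx N m, ∑ z : TLIdx N m,
          (TLP N m a z (Pi.single x 1) * p x) * TLP N m b c (Pi.single z 1) :=
        Finset.sum_comm
    _ = ∑ x : TLIdx N m, p x * ∑ z : TLIdx N m,
          lam N m z D * lam N m x (phi N m a * phi N m z - phi N m z * phi N m a) := by
        refine Finset.sum_congr rfl fun x _ => ?_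
        rw [Finset.mul_sum]
        refine Finset.sum_congr rfl fun z _ => ?_
        rw [TLP_single_eq_lam, TLP_single_eq_lam, ← hD]; ring
    _ = ∑ x : TLIdx N m, p x * lam N m x
          (∑ z : TLIdx N m, lam N m z D • (phi N m a * phi N m z - phi N m z * phi N m a)) := by
        refine Finset.sum_congr rfl fun x _ => ?_
        rw [lam_sum_smul]
    _ = ∑ x : TLIdx N m, p x * lam N m x (phi N m a * D - D * phi N m a) := by
        refine Finset.sum_congr rfl fun x _ => ?_
        rw [show (∑ z : TLIdx N m, lam N m z D • (phi N m a * phi N m z - phi N m z * phi N m a))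
              = phi N m a * (∑ z : TLIdx N m, lam N m z D • phi N m z)
                - (∑ z : TLIdx N m, lam N m z D • phi N m z) * phi N m a from by
            rw [Finset.mul_sum, Finset.sum_mul, ← Finset.sum_sub_distrib]
            exact Finset.sum_congr rfl fun z _ => by
              rw [smul_sub, mul_smul_comm, smul_mul_assoc],
          hrec]

end Aux

/-- the linear bracket defined by the above structure matrix satisfies
the Jacobi identity on coordinate functions, hence defines a Poisson structure. -/
theorem stmt13 (N m : ℕ) [NeZero N] :
    ∀ (p : TLIdx N m → ℝ) (u v w : TLIdx N m),
      (∑ z : TLIdx N m,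
        (TLP N m u z p * fderiv ℝ (fun q => TLP N m v w q) p (Pi.single z 1)
          + TLP N m v z p * fderiv ℝ (fun q => TLP N m w u q) p (Pi.single z 1)
          + TLP N m w z p * fderiv ℝ (fun q => TLP N m u v q) p (Pi.single z 1))) = 0 := by
  intro p u v w
  have key0 : ∀ X Y Z : Matrix (ZMod N × Fin (m+1)) (ZMod N × Fin (m+1)) ℝ,
      (X * (Y*Z - Z*Y) - (Y*Z - Z*Y) * X) + (Y * (Z*X - X*Z) - (Z*X - X*Z) * Y)
        + (Z * (X*Y - Y*X) - (X*Y - Y*X) * Z) = 0 := fun X Y Z => by noncomm_ring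
  simp only [fderiv_TLP]
  rw [Finset.sum_add_distrib, Finset.sum_add_distrib,
    claim N m u v w p, claim N m v w u p, claim N m w u v p,
    ← Finset.sum_add_distrib, ← Finset.sum_add_distrib]
  refine Finset.sum_eq_zero fun x _ => ?_
  rw [← mul_add, ← mul_add, ← lam_add, ← lam_add, key0, lam_zero, mul_zero]
end

section
/- The flow of the relativistic system ḃ_k = a_k^{(1)}/(1+αb_{k+1}) − a_{k−1}^{(1)}/(1+αb_{k−1}), ȧ_k^{(j)} = a_k^{(j)}(b_{k+j}/(1+αb_{k+j}) − b_k/(1+αb_k)) + (a_k^{(j+1)}/(1+αb_{k+j+1}) − a_{k−1}^{(j+1)}/(1+αb_{k−1})) (with a^{(m+1)} := 0) is Hamiltonian with respect to the bracket {b_k,b_{k+1}}₁ = αa_k^{(1)}, {b_k,a_k^{(j)}}₁ = −a_k^{(j)}, {a_k^{(j)},b_{k+j}}₁ = −a_k^{(j)}, {b_k,a_{k+1}^{(j)}}₁ = αa_k^{(j+1)}, {a_k^{(j)},b_{k+j+1}}₁ = αa_k^{(j+1)}, {a_k^{(i)},a_{k+i}^{(j)}}₁ = −a_k^{(i+j)},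 {a_k^{(i)},a_{k+i+1}^{(j)}}₁ = αa_k^{(i+j+1)}, with Hamilton function H₀ = −α^{−2} Σ_k log(1+αb_k). -/
/-- Coordinate index set: `inl k ↦ b_k`, `inr (j,k) ↦ a_k^{(j)}` with paper level `(j:ℕ)+1`. -/
abbrev RTIdx (N m : ℕ) := ZMod N ⊕ (Fin m × ZMod N)

/-- The field value `a_k^{(lev)}` with the conventions `a_k^{(0)} = b_k` and
`a_k^{(lev)} = 0` for `lev > m`. -/
def aval (N m : ℕ) (lev : ℕ) (k : ZMod N) (p : RTIdx N m → ℝ) : ℝ :=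
  if h0 : lev = 0 then p (.inl k)
  else if h : lev ≤ m then p (.inr (⟨lev - 1, by omega⟩, k)) else 0

/-- Paper level of a coordinate (`0` for `b`, `j` for `a^{(j)}`). -/
def levOf {N m : ℕ} : RTIdx N m → ℕ
  | .inl _ => 0
  | .inr (j, _) => (j : ℕ) + 1

/-- Lattice site of a coordinate. -/
def siteOf {N m : ℕ} : RTIdx N m → ZMod N
  | .inl k => k
  | .inr (_, k) => k

/-- Structure matrix of the relativistic linear bracket:
`{b_k,b_{k+1}} = αa_k^{(1)}`, `{b_k,a_k^{(j)}} = {a_k^{(j)},b_{k+j}} = −a_k^{(j)}`,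
`{b_k,a_{k+1}^{(j)}} = {a_k^{(j)},b_{k+j+1}} = αa_k^{(j+1)}`,
`{a_k^{(i)},a_{k+i}^{(j)}} = −a_k^{(i+j)}`, `{a_k^{(i)},a_{k+i+1}^{(j)}} = αa_k^{(i+j+1)}`,
written uniformly using the conventions `a^{(0)} = b`, `a^{(i)} = 0` for `i > m`. -/
def RTLP (N m : ℕ) (α : ℝ) (u v : RTIdx N m) (p : RTIdx N m → ℝ) : ℝ :=
  (if siteOf v = siteOf u + ((levOf u : ℕ) : ZMod N)
    then -aval N m (levOf u + levOf v) (siteOf u) p else 0)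
  + (if siteOf u = siteOf v + ((levOf v : ℕ) : ZMod N)
    then aval N m (levOf u + levOf v) (siteOf v) p else 0)
  + (if siteOf v = siteOf u + ((levOf u : ℕ) : ZMod N) + 1
    then α * aval N m (levOf u + levOf v + 1) (siteOf u) p else 0)
  + (if siteOf u = siteOf v + ((levOf v : ℕ) : ZMod N) + 1
    then -α * aval N m (levOf u + levOf v + 1) (siteOf v) p else 0)

/-- The Hamilton function `H₀ = −α⁻² Σ_k log(1+αb_k)`. -/
noncomputable def RTH0 (N m : ℕ) [NeZero N] (α : ℝ) (q : RTIdx N m → ℝ) : ℝ :=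
  -(α⁻¹ * α⁻¹) * ∑ k : ZMod N, Real.log (1 + α * q (.inl k))

lemma hasFDeriv_RTH0 (N m : ℕ) [NeZero N] (α : ℝ) (p : RTIdx N m → ℝ)
    (hp : ∀ k, 1 + α * p (.inl k) ≠ 0) :
    HasFDerivAt (RTH0 N m α)
      ((-(α⁻¹*α⁻¹)) • ∑ k : ZMod N, (α / (1 + α * p (.inl k))) •
        (ContinuousLinearMap.proj (R := ℝ) (φ := fun _ : RTIdx N m => ℝ) (Sum.inl k))) p := by
  have h1 : ∀ k : ZMod N, HasFDerivAt (fun q : RTIdx N m → ℝ => Real.log (1 + α * q (.inl k)))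
      ((α / (1 + α * p (.inl k))) • (ContinuousLinearMap.proj (R := ℝ)
        (φ := fun _ : RTIdx N m => ℝ) (Sum.inl k))) p := by
    intro k
    have hin : HasFDerivAt (fun q : RTIdx N m → ℝ => 1 + α * q (.inl k))
        (α • (ContinuousLinearMap.proj (R := ℝ) (φ := fun _ : RTIdx N m => ℝ) (Sum.inl k))) p := by
      have := ((ContinuousLinearMap.proj (R := ℝ) (φ := fun _ : RTIdx N m => ℝ)
        (Sum.inl k)).hasFDerivAt (x := p)).const_mul α
      exact this.const_add 1
    have := hin.log (hp k)
    have e : (α / (1 + α * p (.inl k))) = (1 + α * p (.inl k))⁻¹ * α := by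
      rw [div_eq_mul_inv, mul_comm]
    rw [e, ← smul_smul]; exact this
  have hs := HasFDerivAt.fun_sum (u := (Finset.univ : Finset (ZMod N))) (fun k _ => h1 k)
  have := hs.const_mul (-(α⁻¹*α⁻¹))
  exact this

lemma fderiv_RTH0_inl (N m : ℕ) [NeZero N] (α : ℝ) (p : RTIdx N m → ℝ)
    (hp : ∀ k, 1 + α * p (.inl k) ≠ 0) (l : ZMod N) :
    fderiv ℝ (RTH0 N m α) p (Pi.single (Sum.inl l : RTIdx N m) 1) =
      -α⁻¹ / (1 + α * p (.inl l)) := by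
  rw [(hasFDeriv_RTH0 N m α p hp).fderiv]
  simp only [ContinuousLinearMap.smul_apply, ContinuousLinearMap.sum_apply,
    ContinuousLinearMap.proj_apply]
  rw [Finset.sum_eq_single l]
  · simp [Pi.single_apply]
    field_simp
  · intro b _ hb
    simp [Pi.single_apply, Sum.inl.injEq, hb]
  · simp

lemma fderiv_RTH0_inr (N m : ℕ) [NeZero N] (α : ℝ) (p : RTIdx N m → ℝ)
    (hp : ∀ k, 1 + α * p (.inl k) ≠ 0) (w : Fin m × ZMod N) :
    fderiv ℝ (RTH0 N m α) p (Pi.single (Sum.inr w : RTIdx N m) 1) = 0 := by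
  rw [(hasFDeriv_RTH0 N m α p hp).fderiv]
  simp [Pi.single_apply]

lemma RTLP_inl_inl (N m : ℕ) (α : ℝ) (l k : ZMod N) (p : RTIdx N m → ℝ) :
    RTLP N m α (.inl l) (.inl k) p =
      (if l = k - 1 then α * aval N m 1 l p else 0)
      + (if l = k + 1 then -α * aval N m 1 k p else 0) := by
  have h1 : (k = l + 1) ↔ (l = k - 1) := by
    rw [eq_comm (a := l), sub_eq_iff_eq_add, eq_comm]
  simp only [RTLP, levOf, siteOf, Nat.cast_zero, add_zero, Nat.add_zero, zero_add,
    eq_comm (a := k) (b := l), h1]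
  split_ifs with hA hB hC hD hE hF hG hH <;> try ring
  all_goals (try subst hA) <;> ring

lemma RTLP_inl_inr (N m : ℕ) (α : ℝ) (l k : ZMod N) (j : Fin m) (p : RTIdx N m → ℝ) :
    RTLP N m α (.inl l) (.inr (j, k)) p =
      (if l = k then -aval N m ((j:ℕ)+1) k p else 0)
      + (if l = k + (((j:ℕ)+1 : ℕ) : ZMod N) then aval N m ((j:ℕ)+1) k p else 0)
      + (if l = k - 1 then α * aval N m ((j:ℕ)+2) l p else 0)
      + (if l = k + (((j:ℕ)+1 : ℕ) : ZMod N) + 1 then -α * aval N m ((j:ℕ)+2) k p else 0) := by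
  have h1 : (k = l + 1) ↔ (l = k - 1) := by
    rw [eq_comm (a := l), sub_eq_iff_eq_add, eq_comm]
  simp only [RTLP, levOf, siteOf, Nat.cast_zero, add_zero, Nat.add_zero, zero_add,
    eq_comm (a := k) (b := l), h1]
  by_cases h : l = k <;> simp [h]

lemma aval_inr (N m : ℕ) (j : Fin m) (k : ZMod N) (p : RTIdx N m → ℝ) :
    aval N m ((j:ℕ)+1) k p = p (.inr (j, k)) := by
  have hj := j.isLt
  simp only [aval, Nat.add_sub_cancel, dif_neg (Nat.succ_ne_zero _), dif_pos (by omega : (j:ℕ)+1 ≤ m)]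

/-- the rational relativistic lattice KP flow is Hamiltonian with respect
to the relativistic linear bracket, with Hamilton function `H₀`. -/
theorem stmt15 (N m : ℕ) [NeZero N] (hm : 1 ≤ m) (α : ℝ) (hα : α ≠ 0) :
    ∀ p : RTIdx N m → ℝ, (∀ k : ZMod N, 0 < 1 + α * p (.inl k)) →
      (∀ k : ZMod N,
        aval N m 1 k p / (1 + α * p (.inl (k + 1)))
            - aval N m 1 (k - 1) p / (1 + α * p (.inl (k - 1)))
          = ∑ u : RTIdx N m,
              fderiv ℝ (RTH0 N m α) p (Pi.single u 1) * RTLP N m α u (.inl k) p) ∧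
      (∀ (j : Fin m) (k : ZMod N),
        p (.inr (j, k)) *
            (p (.inl (k + (((j : ℕ) + 1 : ℕ) : ZMod N)))
                / (1 + α * p (.inl (k + (((j : ℕ) + 1 : ℕ) : ZMod N))))
              - p (.inl k) / (1 + α * p (.inl k)))
          + (aval N m ((j : ℕ) + 2) k p
                / (1 + α * p (.inl (k + (((j : ℕ) + 1 : ℕ) : ZMod N) + 1)))
             - aval N m ((j : ℕ) + 2) (k - 1) p / (1 + α * p (.inl (k - 1))))
          = ∑ u : RTIdx N m,
              fderiv ℝ (RTH0 N m α) p (Pi.single u 1) * RTLP N m α u (.inr (j, k)) p) := by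
  intro p hpos
  have hp : ∀ k, 1 + α * p (.inl k) ≠ 0 := fun k => (hpos k).ne'
  constructor
  · intro k
    rw [Fintype.sum_sum_type]
    have hzero : ∀ w : Fin m × ZMod N,
        fderiv ℝ (RTH0 N m α) p (Pi.single (Sum.inr w : RTIdx N m) 1)
          * RTLP N m α (.inr w) (.inl k) p = 0 := by
      intro w; rw [fderiv_RTH0_inr N m α p hp]; ring
    rw [Finset.sum_congr rfl (fun w _ => hzero w), Finset.sum_const, smul_zero, add_zero]
    have hterm : ∀ l : ZMod N,
        fderiv ℝ (RTH0 N m α) p (Pi.single (Sum.inl l : RTIdx N m) 1)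
          * RTLP N m α (.inl l) (.inl k) p
        = (if l = k - 1 then (-α⁻¹ / (1 + α * p (.inl l))) * (α * aval N m 1 l p) else 0)
          + (if l = k + 1 then (-α⁻¹ / (1 + α * p (.inl l))) * (-α * aval N m 1 k p) else 0) := by
      intro l
      rw [fderiv_RTH0_inl N m α p hp, RTLP_inl_inl, mul_add, mul_ite, mul_ite, mul_zero]
    rw [Finset.sum_congr rfl (fun l _ => hterm l), Finset.sum_add_distrib,
      Finset.sum_ite_eq' Finset.univ (k - 1), Finset.sum_ite_eq' Finset.univ (k + 1)]
    simp only [Finset.mem_univ, if_true]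
    field_simp [hα, hp (k + 1), hp (k - 1)]
    ring
  · intro j k
    rw [Fintype.sum_sum_type]
    have hzero : ∀ w : Fin m × ZMod N,
        fderiv ℝ (RTH0 N m α) p (Pi.single (Sum.inr w : RTIdx N m) 1)
          * RTLP N m α (.inr w) (.inr (j, k)) p = 0 := by
      intro w; rw [fderiv_RTH0_inr N m α p hp]; ring
    rw [Finset.sum_congr rfl (fun w _ => hzero w), Finset.sum_const, smul_zero, add_zero]
    have hterm : ∀ l : ZMod N,
        fderiv ℝ (RTH0 N m α) p (Pi.single (Sum.inl l : RTIdx N m) 1)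
          * RTLP N m α (.inl l) (.inr (j, k)) p
        = (if l = k then (-α⁻¹ / (1 + α * p (.inl l))) * (-aval N m ((j:ℕ)+1) k p) else 0)
          + (if l = k + (((j:ℕ)+1 : ℕ) : ZMod N) then
              (-α⁻¹ / (1 + α * p (.inl l))) * (aval N m ((j:ℕ)+1) k p) else 0)
          + (if l = k - 1 then
              (-α⁻¹ / (1 + α * p (.inl l))) * (α * aval N m ((j:ℕ)+2) l p) else 0)
          + (if l = k + (((j:ℕ)+1 : ℕ) : ZMod N) + 1 then
              (-α⁻¹ / (1 + α * p (.inl l))) * (-α * aval N m ((j:ℕ)+2) k p) else 0) := by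
      intro l
      rw [fderiv_RTH0_inl N m α p hp, RTLP_inl_inr]
      simp only [mul_add, mul_ite, mul_zero]
    rw [Finset.sum_congr rfl (fun l _ => hterm l), Finset.sum_add_distrib,
      Finset.sum_add_distrib, Finset.sum_add_distrib,
      Finset.sum_ite_eq' Finset.univ k, Finset.sum_ite_eq' Finset.univ (k + (((j:ℕ)+1 : ℕ) : ZMod N)),
      Finset.sum_ite_eq' Finset.univ (k - 1),
      Finset.sum_ite_eq' Finset.univ (k + (((j:ℕ)+1 : ℕ) : ZMod N) + 1)]
    simp only [Finset.mem_univ, if_true, aval_inr]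
    have hk := hp k
    have hy := hp (k + (((j:ℕ)+1 : ℕ) : ZMod N))
    have hz := hp (k + (((j:ℕ)+1 : ℕ) : ZMod N) + 1)
    have hw := hp (k - 1)
    revert hk hy hz hw
    generalize p (Sum.inl (k + (((j:ℕ)+1 : ℕ) : ZMod N) + 1)) = z
    generalize p (Sum.inl (k + (((j:ℕ)+1 : ℕ) : ZMod N))) = y
    generalize p (Sum.inl (k - 1)) = w
    generalize p (Sum.inl k) = x
    generalize p (Sum.inr (j, k)) = a
    generalize aval N m ((j:ℕ)+2) k p = A
    generalize aval N m ((j:ℕ)+2) (k-1) p = B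
    intro hk hy hz hw
    field_simp
    field_simp
    ring
end
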